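/- arXiv:2305.07006 — 6 statements merged into one kernel-verified Lean document; each statement's English description precedes it below -/
import Mathlib

section
/- Let u, w ∈ ℝ≥0ⁿ and α ≥ 1. Suppose that for every k ∈ {1,…,n}, α times the sum of the k smallest coordinates of u is at least the sum of the k smallest coordinates of w. Then for every admissible welfare function W : ℝ≥0ⁿ → ℝ≥0, α·W(u) ≥ W(w). -/
/-!
After sorting, the hypothesis says that every prefix sum of the sorted `w` is at most the
corresponding prefix sum of `v = α • sort u`. A symmetric concave `W` does not decrease under a
Pigou–Dalton transfer (from a richer to a poorer coordinate, without reversing their order),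
and finitely many such transfers move the sorted `w` to a vector below `v` coordinatewise, so
`W w ≤ W v` by monotonicity. Concavity and `W 0 = 0` give `W (α • u) ≤ α * W u` for `α ≥ 1`.
-/

open Finset

namespace PD

/-- An admissible welfare function on nonnegative vectors: nonnegative,
symmetric, weakly increasing, concave, and normalized at 0. -/
def Admissible (n : ℕ) (W : (Fin n → ℝ) → ℝ) : Prop :=
  (∀ u : Fin n → ℝ, (∀ i, 0 ≤ u i) → 0 ≤ W u) ∧
  (∀ u : Fin n → ℝ, (∀ i, 0 ≤ u i) → ∀ σ : Equiv.Perm (Fin n), W (u ∘ σ) = W u) ∧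
  (∀ u u' : Fin n → ℝ, (∀ i, 0 ≤ u i) → (∀ i, u i ≤ u' i) → W u ≤ W u') ∧
  (∀ u u' : Fin n → ℝ, ∀ t : ℝ, (∀ i, 0 ≤ u i) → (∀ i, 0 ≤ u' i) → 0 ≤ t → t ≤ 1 →
    t * W u + (1 - t) * W u' ≤ W (fun i => t * u i + (1 - t) * u' i)) ∧
  W (fun _ => 0) = 0

/-- The sum of the `k` smallest coordinates of `x`: the minimum of `∑_{i ∈ A} x i`
over subsets `A` of cardinality `k`. -/
noncomputable def kSmallestSum {n : ℕ} (x : Fin n → ℝ) (k : ℕ) : ℝ :=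
  sInf { r : ℝ | ∃ A : Finset (Fin n), A.card = k ∧ r = ∑ i ∈ A, x i }

variable {n : ℕ} {W : (Fin n → ℝ) → ℝ}

theorem Admissible.comp_perm (hW : Admissible n W) {u : Fin n → ℝ} (hu : ∀ i, 0 ≤ u i)
    (σ : Equiv.Perm (Fin n)) : W (u ∘ σ) = W u :=
  hW.2.1 u hu σ

theorem Admissible.mono (hW : Admissible n W) {u u' : Fin n → ℝ} (hu : ∀ i, 0 ≤ u i)
    (huu' : ∀ i, u i ≤ u' i) : W u ≤ W u' :=
  hW.2.2.1 u u' hu huu'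

theorem Admissible.concave (hW : Admissible n W) {u u' : Fin n → ℝ} (hu : ∀ i, 0 ≤ u i)
    (hu' : ∀ i, 0 ≤ u' i) {t : ℝ} (ht₀ : 0 ≤ t) (ht₁ : t ≤ 1) :
    t * W u + (1 - t) * W u' ≤ W (fun i => t * u i + (1 - t) * u' i) :=
  hW.2.2.2.1 u u' t hu hu' ht₀ ht₁

theorem Admissible.map_zero (hW : Admissible n W) : W (fun _ => 0) = 0 :=
  hW.2.2.2.2

theorem Admissible.map_smul_le (hW : Admissible n W) {u : Fin n → ℝ} (hu : ∀ i, 0 ≤ u i)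
    {α : ℝ} (hα : 1 ≤ α) : W (α • u) ≤ α * W u := by
  have hα₀ : 0 < α := one_pos.trans_le hα
  have h := hW.concave (u := α • u) (u' := fun _ => 0)
    (fun i => mul_nonneg hα₀.le (hu i)) (fun _ => le_rfl) (inv_nonneg.2 hα₀.le)
    (inv_le_one_of_one_le₀ hα)
  have hu_eq : (fun i => α⁻¹ * (α • u) i + (1 - α⁻¹) * 0) = u := by
    funext i
    simp [hα₀.ne']
  rw [hW.map_zero, hu_eq, mul_zero, add_zero] at h
  calc W (α • u) = α * (α⁻¹ * W (α • u)) := by field_simp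
    _ ≤ α * W u := mul_le_mul_of_nonneg_left h hα₀.le

def transfer (z : Fin n → ℝ) (p k : Fin n) (δ : ℝ) : Fin n → ℝ :=
  z - Pi.single p δ + Pi.single k δ

theorem sum_transfer (z : Fin n → ℝ) (p k : Fin n) (δ : ℝ) (s : Finset (Fin n)) :
    ∑ i ∈ s, transfer z p k δ i =
      ∑ i ∈ s, z i - (if p ∈ s then δ else 0) + (if k ∈ s then δ else 0) := by
  simp only [transfer, Pi.add_apply, Pi.sub_apply, sum_add_distrib, sum_sub_distrib,
    sum_pi_single']

theorem transfer_nonneg {z : Fin n → ℝ} (hz : ∀ i, 0 ≤ z i) {p k : Fin n} {δ : ℝ}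
    (hδ₀ : 0 ≤ δ) (hδ : δ ≤ z p - z k) (i : Fin n) : 0 ≤ transfer z p k δ i := by
  have := hz i
  have := hz k
  simp only [transfer, Pi.add_apply, Pi.sub_apply, Pi.single_apply]
  split_ifs with hp hk <;> subst_vars <;> linarith

/-- A transfer from a richer to a poorer coordinate that does not reverse their order is a
convex combination of `z` and `z ∘ swap p k`. -/
theorem Admissible.le_map_transfer (hW : Admissible n W) {z : Fin n → ℝ} (hz : ∀ i, 0 ≤ z i)
    {p k : Fin n} {δ : ℝ} (hδ₀ : 0 ≤ δ) (hδ : δ ≤ z p - z k) :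
    W z ≤ W (transfer z p k δ) := by
  rcases eq_or_lt_of_le (hδ₀.trans hδ) with hpk | hpk
  · obtain rfl : δ = 0 := by linarith
    simp [transfer]
  set s := δ / (z p - z k)
  have hs₀ : 0 ≤ s := div_nonneg hδ₀ hpk.le
  have hs₁ : s ≤ 1 := div_le_one_of_le₀ hδ hpk.le
  have hzσ : ∀ i, 0 ≤ (z ∘ Equiv.swap p k) i := fun i => hz _
  have h := hW.concave hz hzσ (sub_nonneg.2 hs₁) (sub_le_self 1 hs₀)
  rw [hW.comp_perm hz] at h
  have hne : p ≠ k := by rintro rfl; simp at hpk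
  have hcomb : (fun i => (1 - s) * z i + (1 - (1 - s)) * (z ∘ Equiv.swap p k) i) =
      transfer z p k δ := by
    have hδs : δ = s * (z p - z k) := (div_mul_cancel₀ δ hpk.ne').symm
    funext i
    simp only [transfer, Function.comp_apply, Pi.add_apply, Pi.sub_apply, Pi.single_apply]
    by_cases hip : i = p
    · subst hip
      simp only [sub_sub_cancel, Equiv.swap_apply_left, if_pos, hne, if_false, hδs, add_zero]
      ring
    by_cases hik : i = k
    · subst hik
      simp only [sub_sub_cancel, Equiv.swap_apply_right, hip, if_pos, if_false, sub_zero, hδs]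
      ring
    · simp only [sub_sub_cancel, Equiv.swap_apply_of_ne_of_ne hip hik, hip, hik, if_false,
        sub_zero, add_zero]
      ring
  rw [hcomb] at h
  linarith

theorem exists_lt_of_lt_of_sum_Iic_le {z v : Fin n → ℝ}
    (hzv : ∀ j, ∑ i ∈ Iic j, z i ≤ ∑ i ∈ Iic j, v i) {p : Fin n} (hp : v p < z p) :
    ∃ k < p, z k < v k := by
  by_contra! h
  have hlt : ∑ i ∈ Iic p, v i < ∑ i ∈ Iic p, z i := by
    refine sum_lt_sum (fun i hi => ?_) ⟨p, mem_Iic.2 le_rfl, hp⟩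
    rcases (mem_Iic.1 hi).lt_or_eq with hip | rfl
    · exact h i hip
    · exact hp.le
  exact (hzv p).not_gt hlt

theorem sum_Iic_transfer_le {z v : Fin n → ℝ}
    (hzv : ∀ j, ∑ i ∈ Iic j, z i ≤ ∑ i ∈ Iic j, v i) {p k : Fin n} (hkp : k < p)
    (hbelow : ∀ i < p, z i ≤ v i) {δ : ℝ} (hδ : δ ≤ v k - z k) (j : Fin n) :
    ∑ i ∈ Iic j, transfer z p k δ i ≤ ∑ i ∈ Iic j, v i := by
  have hj := hzv j
  rw [sum_transfer]
  simp only [mem_Iic]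
  by_cases hkj : k ≤ j
  · by_cases hpj : p ≤ j
    · simp only [hpj, hkj, if_true]
      linarith
    · have hgap : v k - z k ≤ ∑ i ∈ Iic j, (v i - z i) :=
        single_le_sum (f := fun i => v i - z i)
          (fun i hi => sub_nonneg.2 (hbelow i ((mem_Iic.1 hi).trans_lt (not_le.1 hpj))))
          (mem_Iic.2 hkj)
      rw [sum_sub_distrib] at hgap
      simp only [hpj, hkj, if_true, if_false]
      linarith
  · have hpj : ¬ p ≤ j := fun hpj => hkj (hkp.le.trans hpj)
    simp only [hpj, hkj, if_false]
    linarith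

theorem card_transfer_ne_lt {z v : Fin n → ℝ} {p k : Fin n} (hpk : p ≠ k) (hp : z p ≠ v p)
    (hk : z k ≠ v k) {δ : ℝ} (hδ : z p - δ = v p ∨ z k + δ = v k) :
    #{i | transfer z p k δ i ≠ v i} < #{i | z i ≠ v i} := by
  have happly : ∀ i, transfer z p k δ i =
      z i - (if i = p then δ else 0) + (if i = k then δ else 0) := by
    intro i
    simp [transfer, Pi.single_apply]
  refine card_lt_card ((ssubset_iff_of_subset fun i => ?_).2 ?_)
  · by_cases hip : i = p
    · simp [hip, hp]
    by_cases hik : i = k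
    · simp [hik, hk]
    · simp [happly, hip, hik]
  · rcases hδ with hδ | hδ
    · exact ⟨p, by simp [hp], by simp [happly, hpk, hδ]⟩
    · exact ⟨k, by simp [hk], by simp [happly, hpk.symm, hδ]⟩

/-- Induction on the number of coordinates where `z` and `v` differ: if some `z p` exceeds
`v p` (take `p` least), the prefix condition at `p` gives `k < p` with `z k < v k`, and the
largest transfer from `p` to `k` keeping the prefix condition makes one of them agree with `v`. -/
theorem Admissible.le_of_sum_Iic_le (hW : Admissible n W) {v : Fin n → ℝ} (hv : Monotone v)
    {z : Fin n → ℝ} (hz : ∀ i, 0 ≤ z i) (hzv : ∀ j, ∑ i ∈ Iic j, z i ≤ ∑ i ∈ Iic j, v i) :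
    W z ≤ W v := by
  induction hd : #{i | z i ≠ v i} using Nat.strong_induction_on generalizing z with
  | _ d ih =>
  by_cases hle : ∀ i, z i ≤ v i
  · exact hW.mono hz hle
  push Not at hle
  obtain ⟨p, hp, hpmin⟩ := exists_minimal_of_wellFoundedLT _ hle
  have hbelow : ∀ i < p, z i ≤ v i := fun i hip =>
    not_lt.1 fun hi => hip.not_ge (hpmin hi hip.le)
  obtain ⟨k, hkp, hk⟩ := exists_lt_of_lt_of_sum_Iic_le hzv hp
  set δ := min (v k - z k) (z p - v p)
  have hδ₀ : 0 ≤ δ := le_min (by linarith) (by linarith)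
  have hδ : δ ≤ z p - z k := (min_le_right _ _).trans (by linarith [hv hkp.le])
  have hfix : z p - δ = v p ∨ z k + δ = v k := by
    rcases min_choice (v k - z k) (z p - v p) with h | h <;> [right; left] <;> linarith
  calc W z ≤ W (transfer z p k δ) := hW.le_map_transfer hz hδ₀ hδ
    _ ≤ W v := ih _ (hd ▸ card_transfer_ne_lt hkp.ne' hp.ne' hk.ne hfix)
        (transfer_nonneg hz hδ₀ hδ)
        (sum_Iic_transfer_le hzv hkp hbelow (min_le_left _ _)) rfl

/-- Exchange argument: `Iic j \ s` and `s \ Iic j` have the same size, and `y` is at most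
`y j` on the first and at least `y j` on the second. -/
theorem Monotone.sum_Iic_le_sum {ι M : Type*} [LinearOrder ι] [LocallyFiniteOrderBot ι]
    [AddCommMonoid M] [LinearOrder M] [IsOrderedCancelAddMonoid M] {y : ι → M}
    (hy : Monotone y) (j : ι) {s : Finset ι} (hs : #s = #(Iic j)) :
    ∑ i ∈ Iic j, y i ≤ ∑ i ∈ s, y i := by
  have hexchange : ∑ i ∈ Iic j \ s, y i ≤ ∑ i ∈ s \ Iic j, y i :=
    calc ∑ i ∈ Iic j \ s, y i ≤ #(Iic j \ s) • y j :=
          sum_le_card_nsmul _ _ _ fun i hi => hy (mem_Iic.1 (mem_sdiff.1 hi).1)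
      _ = #(s \ Iic j) • y j := by rw [card_sdiff_comm hs.symm]
      _ ≤ ∑ i ∈ s \ Iic j, y i :=
          card_nsmul_le_sum _ _ _ fun i hi =>
            hy (le_of_lt (not_le.1 fun h => (mem_sdiff.1 hi).2 (mem_Iic.2 h)))
  rw [← sum_inter_add_sum_sdiff (Iic j) s, ← sum_inter_add_sum_sdiff s (Iic j), inter_comm]
  exact add_le_add le_rfl hexchange

theorem kSmallestSum_succ_eq (x : Fin n → ℝ) (j : Fin n) :
    kSmallestSum x (j + 1) = ∑ i ∈ Iic j, x (Tuple.sort x i) := by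
  set σ := Tuple.sort x
  refine IsLeast.csInf_eq ⟨⟨(Iic j).map σ.toEmbedding, by simp, by simp [sum_map]⟩, ?_⟩
  rintro _ ⟨A, hA, rfl⟩
  have hcard : #(A.map σ.symm.toEmbedding) = #(Iic j) := by simp [hA]
  calc ∑ i ∈ Iic j, x (σ i) ≤ ∑ i ∈ A.map σ.symm.toEmbedding, x (σ i) :=
        Monotone.sum_Iic_le_sum (Tuple.monotone_sort x) j hcard
    _ = ∑ i ∈ A, x i := by simp [sum_map]

theorem stmt2 (n : ℕ) (u w : Fin n → ℝ)
    (hu : ∀ i, 0 ≤ u i) (hw : ∀ i, 0 ≤ w i)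
    (α : ℝ) (hα : 1 ≤ α)
    (hmaj : ∀ k : ℕ, 1 ≤ k → k ≤ n → kSmallestSum w k ≤ α * kSmallestSum u k)
    (W : (Fin n → ℝ) → ℝ) (hW : Admissible n W) :
    W w ≤ α * W u := by
  set u' := u ∘ Tuple.sort u
  set w' := w ∘ Tuple.sort w
  have hu' : ∀ i, 0 ≤ u' i := fun i => hu _
  have hprefix : ∀ j, ∑ i ∈ Iic j, w' i ≤ ∑ i ∈ Iic j, (α • u') i := by
    intro j
    have h := hmaj (j + 1) (Nat.le_add_left 1 j) j.isLt
    simpa [u', w', kSmallestSum_succ_eq, mul_sum] using h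
  have hmono : Monotone (α • u') :=
    (Tuple.monotone_sort u).const_mul (zero_le_one.trans hα)
  calc W w = W w' := (hW.comp_perm hw _).symm
    _ ≤ W (α • u') := hW.le_of_sum_Iic_le hmono (fun i => hw _) hprefix
    _ ≤ α * W u' := hW.map_smul_le hu' hα
    _ = α * W u := by rw [hW.comp_perm hu]

end PD
end

section
/- Let u, w ∈ ℝ≥0ⁿ and α ≥ 1. Suppose that for every admissible welfare function W : ℝ≥0ⁿ → ℝ≥0 one has α·W(u) ≥ W(w). Then for every k ∈ {1,…,n}, α times the sum of the k smallest coordinates of u is at least the sum of the k smallest coordinates of w. -/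
open Finset

namespace PD

lemma kss_ne {n k : ℕ} (hk : k ≤ n) :
    ((univ : Finset (Fin n)).powersetCard k).Nonempty :=
  powersetCard_nonempty.2 (by simpa using hk)

lemma kss_eq {n : ℕ} (x : Fin n → ℝ) (k : ℕ) (hk : k ≤ n) :
    kSmallestSum x k =
      ((univ : Finset (Fin n)).powersetCard k).inf' (kss_ne hk)
        (fun A => ∑ i ∈ A, x i) := by
  rw [Finset.inf'_eq_csInf_image, kSmallestSum]
  congr 1
  ext r
  constructor
  · rintro ⟨A, hA, rfl⟩
    exact ⟨A, Finset.mem_coe.2 (Finset.mem_powersetCard.2 ⟨Finset.subset_univ A, hA⟩), rfl⟩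
  · rintro ⟨A, hA, rfl⟩
    exact ⟨A, (Finset.mem_powersetCard.1 (Finset.mem_coe.1 hA)).2, rfl⟩

theorem stmt3 (n : ℕ) (u w : Fin n → ℝ)
    (hu : ∀ i, 0 ≤ u i) (hw : ∀ i, 0 ≤ w i)
    (α : ℝ) (hα : 1 ≤ α)
    (hdom : ∀ W : (Fin n → ℝ) → ℝ, Admissible n W → W w ≤ α * W u) :
    ∀ k : ℕ, 1 ≤ k → k ≤ n → kSmallestSum w k ≤ α * kSmallestSum u k := by
  intro k _ hk
  refine hdom (fun x => kSmallestSum x k) ?_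
  have hne := kss_ne (n := n) (k := k) hk
  refine ⟨?_, ?_, ?_, ?_, ?_⟩
  · -- nonneg
    intro x hx
    show kSmallestSum x k ≥ 0
    rw [kss_eq x k hk]
    exact Finset.le_inf' hne _ (fun A _ => Finset.sum_nonneg fun i _ => hx i)
  · -- symmetric
    intro x _ σ
    show kSmallestSum (x ∘ σ) k = kSmallestSum x k
    unfold kSmallestSum
    have hset : { r : ℝ | ∃ A : Finset (Fin n), A.card = k ∧ r = ∑ i ∈ A, (x ∘ σ) i }
        = { r : ℝ | ∃ A : Finset (Fin n), A.card = k ∧ r = ∑ i ∈ A, x i } := by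
      ext r
      constructor
      · rintro ⟨A, hA, rfl⟩
        refine ⟨A.image σ, by rw [Finset.card_image_of_injective _ σ.injective, hA], ?_⟩
        rw [Finset.sum_image (fun a _ b _ h => σ.injective h)]
        rfl
      · rintro ⟨A, hA, rfl⟩
        refine ⟨A.image σ.symm, by rw [Finset.card_image_of_injective _ σ.symm.injective, hA], ?_⟩
        rw [Finset.sum_image (fun a _ b _ h => σ.symm.injective h)]
        simp
    rw [hset]
  · -- monotone
    intro x y hx hxy
    show kSmallestSum x k ≤ kSmallestSum y k
    rw [kss_eq x k hk, kss_eq y k hk]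
    obtain ⟨A, hA, hAe⟩ := Finset.exists_mem_eq_inf' hne (fun A => ∑ i ∈ A, y i)
    rw [hAe]
    exact le_trans (Finset.inf'_le _ hA) (Finset.sum_le_sum fun i _ => hxy i)
  · -- concave
    intro x y t hx hy ht ht1
    show t * kSmallestSum x k + (1 - t) * kSmallestSum y k
      ≤ kSmallestSum (fun i => t * x i + (1 - t) * y i) k
    rw [kss_eq x k hk, kss_eq y k hk,
      kss_eq (fun i => t * x i + (1 - t) * y i) k hk]
    obtain ⟨A, hA, hAe⟩ := Finset.exists_mem_eq_inf' hne
      (fun A => ∑ i ∈ A, (t * x i + (1 - t) * y i))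
    rw [hAe, Finset.sum_add_distrib, ← Finset.mul_sum, ← Finset.mul_sum]
    have h1 : t * ((univ.powersetCard k).inf' hne (fun A => ∑ i ∈ A, x i))
        ≤ t * ∑ i ∈ A, x i :=
      mul_le_mul_of_nonneg_left (Finset.inf'_le _ hA) ht
    have h2 : (1 - t) * ((univ.powersetCard k).inf' hne (fun A => ∑ i ∈ A, y i))
        ≤ (1 - t) * ∑ i ∈ A, y i :=
      mul_le_mul_of_nonneg_left (Finset.inf'_le _ hA) (by linarith)
    linarith
  · -- zero
    show kSmallestSum (fun _ => (0:ℝ)) k = 0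
    rw [kss_eq (fun _ => (0:ℝ)) k hk]
    obtain ⟨A, hA, hAe⟩ := Finset.exists_mem_eq_inf' hne
      (fun A : Finset (Fin n) => ∑ _i ∈ A, (0:ℝ))
    rw [hAe]; simp

end PD
end

section
/- For every prior 𝒟 there exists an efficient signaling scheme Z whose revenue equals the Myerson revenue: R(Z) = R^My = max_{v ∈ {v₁,…,vₙ}} v·G_𝒟(v). -/
open Finset MeasureTheory

namespace PD

noncomputable section

/-- Complementary CDF of a mass function `fS` at value `v i`. -/
def G {n : ℕ} (v fS : Fin n → ℝ) (i : Fin n) : ℝ :=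
  ∑ j ∈ Finset.univ.filter (fun j => v i ≤ v j), fS j

/-- A signal is a probability mass function on the values. -/
def IsSignal {n : ℕ} (fS : Fin n → ℝ) : Prop :=
  (∀ i, 0 ≤ fS i) ∧ ∑ i, fS i = 1

/-- The index of the seller's price: the smallest index maximizing `v i * G i`. -/
def priceIdx {n : ℕ} [NeZero n] (v fS : Fin n → ℝ) : Fin n :=
  (Finset.univ.filter (fun i => ∀ j, v j * G v fS j ≤ v i * G v fS i)).min' (by
    haveI : Nonempty (Fin n) := ⟨⟨0, Nat.pos_of_ne_zero (NeZero.ne n)⟩⟩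
    obtain ⟨b, _, hb⟩ := Finset.exists_max_image (Finset.univ : Finset (Fin n))
      (fun i => v i * G v fS i) Finset.univ_nonempty
    exact ⟨b, Finset.mem_filter.mpr ⟨Finset.mem_univ _, fun j => hb j (Finset.mem_univ _)⟩⟩)

/-- Consumer surplus of value `v i` under signal `fS`. -/
def cs {n : ℕ} [NeZero n] (v fS : Fin n → ℝ) (i : Fin n) : ℝ :=
  if v (priceIdx v fS) ≤ v i then v i - v (priceIdx v fS) else 0

/-- Revenue of a signal: the maximum of `v i * G i`. -/
def revSig {n : ℕ} [NeZero n] (v fS : Fin n → ℝ) : ℝ :=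
  Finset.univ.sup' (by
    haveI : Nonempty (Fin n) := ⟨⟨0, Nat.pos_of_ne_zero (NeZero.ne n)⟩⟩
    exact Finset.univ_nonempty) (fun i => v i * G v fS i)

/-- A signaling scheme for prior mass function `f`. -/
structure Scheme (n : ℕ) (f : Fin n → ℝ) where
  Q : ℕ
  sig : Fin Q → Fin n → ℝ
  wt : Fin Q → ℝ
  sig_isSignal : ∀ q, IsSignal (sig q)
  wt_nonneg : ∀ q, 0 ≤ wt q
  wt_sum : ∑ q, wt q = 1
  bayes : ∀ i, ∑ q, wt q * sig q i = f i

/-- Expected consumer surplus of value `v i` under scheme `Z`. -/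
def csZ {n : ℕ} [NeZero n] (v f : Fin n → ℝ) (Z : Scheme n f) (i : Fin n) : ℝ :=
  ∑ q, cs v (Z.sig q) i * (Z.wt q * Z.sig q i / f i)

/-- Expected revenue of a scheme. -/
def revZ {n : ℕ} [NeZero n] (v : Fin n → ℝ) {f : Fin n → ℝ} (Z : Scheme n f) : ℝ :=
  ∑ q, Z.wt q * revSig v (Z.sig q)

/-- A scheme is efficient if on every positive-weight signal, the smallest value
in the support maximizes `v * G`. -/
def Efficient {n : ℕ} (v : Fin n → ℝ) {f : Fin n → ℝ} (Z : Scheme n f) : Prop :=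
  ∀ q, 0 < Z.wt q → ∀ i, (0 < Z.sig q i ∧ ∀ j, 0 < Z.sig q j → i ≤ j) →
    ∀ j, v j * G v (Z.sig q) j ≤ v i * G v (Z.sig q) i

/-- A scheme is monotone if higher values get (weakly) higher expected surplus. -/
def MonotoneScheme {n : ℕ} [NeZero n] (v f : Fin n → ℝ) (Z : Scheme n f) : Prop :=
  ∀ i j : Fin n, v i < v j → csZ v f Z i ≤ csZ v f Z j

/-- A scheme is buyer-optimal if the total expected consumer surplus equals the
expected value minus the Myerson revenue. -/
def BuyerOptimal {n : ℕ} [NeZero n] (v f : Fin n → ℝ) (Z : Scheme n f) : Prop :=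
  ∑ i, f i * csZ v f Z i = (∑ i, f i * v i) - revSig v f

/-- The surplus-mass step function of a scheme: equal to `csZ i` on the quantile
interval `(F(v_{i-1}), F(v_i)]`. -/
def smf {n : ℕ} [NeZero n] (v f : Fin n → ℝ) (Z : Scheme n f) (x : ℝ) : ℝ :=
  ∑ i, if (∑ j ∈ Finset.univ.filter (fun j => j < i), f j) < x ∧
          x ≤ ∑ j ∈ Finset.univ.filter (fun j => j ≤ i), f j
       then csZ v f Z i else 0

/-- Sorted `m`-prefix sum of `g` on `(0,1]`: the infimum of `∫_T g` over
(measurable) subsets `T` of `(0,1]` of total length `m`. -/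
def PF (g : ℝ → ℝ) (m : ℝ) : ℝ :=
  sInf { r : ℝ | ∃ T : Set ℝ, T ⊆ Set.Ioc 0 1 ∧ MeasurableSet T ∧
    volume T = ENNReal.ofReal m ∧ r = ∫ x in T, g x }

/-- Integration `m`-prefix sum of `g`: `∫₀^m g`. -/
def PFV (g : ℝ → ℝ) (m : ℝ) : ℝ := ∫ x in Set.Ioc (0:ℝ) m, g x

/-- A singleton signal puts all mass on one value. -/
def IsSingleton {n : ℕ} (fS : Fin n → ℝ) : Prop :=
  ∃ i : Fin n, fS = fun j => if j = i then 1 else 0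

/-- An equal-revenue binary signal on `v i < v j` puts mass `1 - v i / v j` on
`v i` and `v i / v j` on `v j`. -/
def IsEqRevBinary {n : ℕ} (v : Fin n → ℝ) (fS : Fin n → ℝ) : Prop :=
  ∃ i j : Fin n, v i < v j ∧
    fS = fun l => if l = i then 1 - v i / v j else if l = j then v i / v j else 0

/-- `i` is the smallest value in the support of `fS`. -/
def MinSupp {n : ℕ} (fS : Fin n → ℝ) (i : Fin n) : Prop :=
  0 < fS i ∧ ∀ j, 0 < fS j → i ≤ j

end


/-!
Induct on the size of the support of the prior `f`, whose lowest point is `m`. If pricing at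
`v m` is already optimal, the one-signal scheme is efficient. Otherwise split off the largest
multiple `γ` of the equal-revenue signal `μ` on the support of `f` (under `μ` every price in the
support earns exactly `v m`) that still fits under `f`. The signal `μ` is efficient with revenue
`v m`, and the residual `f' = (f - γ μ) / (1 - γ)` has a smaller support and revenue at most
`(R(f) - γ v m) / (1 - γ)`, because removing `γ μ` lowers the revenue of every supported price
by exactly `γ v m`. So the recursively built scheme earns at most `R(f)`; conversely no scheme
earns less than `R(f)`, as revenue is convex in the signal.
-/

section Revenue

variable {n : ℕ} {v : Fin n → ℝ}

lemma G_eq_sum_Ici (hv : StrictMono v) (g : Fin n → ℝ) (i : Fin n) :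
    G v g i = ∑ j ∈ Ici i, g j := by
  unfold G
  congr 1
  ext j
  simp [hv.le_iff_le]

lemma G_nonneg {g : Fin n → ℝ} (hg : ∀ j, 0 ≤ g j) (i : Fin n) : 0 ≤ G v g i :=
  sum_nonneg fun j _ => hg j

lemma G_sum_mul {Q : ℕ} (w : Fin Q → ℝ) (g : Fin Q → Fin n → ℝ) (i : Fin n) :
    G v (fun j => ∑ q, w q * g q j) i = ∑ q, w q * G v (g q) i := by
  simp only [G, mul_sum]
  exact sum_comm

lemma G_const_mul (c : ℝ) (g : Fin n → ℝ) (i : Fin n) :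
    G v (fun j => c * g j) i = c * G v g i := by
  simp only [G, mul_sum]

lemma G_add_mul (a b : ℝ) (g h : Fin n → ℝ) (i : Fin n) :
    G v (fun j => a * g j + b * h j) i = a * G v g i + b * G v h i := by
  simp only [G, sum_add_distrib, mul_sum]

lemma G_eq_one_of_minSupp (hv : Monotone v) {g : Fin n → ℝ} (hg : IsSignal g) {m : Fin n}
    (hm : MinSupp g m) : G v g m = 1 := by
  rw [G, ← hg.2]
  refine sum_subset (filter_subset _ _) fun j _ hj => ?_
  by_contra hne
  exact hj (mem_filter.mpr ⟨mem_univ j, hv (hm.2 j ((hg.1 j).lt_of_ne' hne))⟩)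

/-- Raising the price `v i` to the first point of `S` above it loses no buyers. -/
lemma mul_G_le_of_forall_mem (hv : StrictMono v) {g : Fin n → ℝ} {S : Finset (Fin n)} {B : ℝ}
    (hg : ∀ j, 0 ≤ g j) (hgS : ∀ j, 0 < g j → j ∈ S) (hB : 0 ≤ B)
    (hSB : ∀ k ∈ S, v k * G v g k ≤ B) (i : Fin n) : v i * G v g i ≤ B := by
  have hg0 : ∀ j, j ∉ S → g j = 0 :=
    fun j hj => le_antisymm (not_lt.mp (mt (hgS j) hj)) (hg j)
  by_cases hne : (S.filter (i ≤ ·)).Nonempty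
  · set k := (S.filter (i ≤ ·)).min' hne
    obtain ⟨hkS, hik⟩ := mem_filter.mp ((S.filter (i ≤ ·)).min'_mem hne)
    have hGk : G v g i = G v g k := by
      rw [G_eq_sum_Ici hv, G_eq_sum_Ici hv]
      refine (sum_subset (Ici_subset_Ici.mpr hik) fun j hji hjk => hg0 j fun hjS => ?_).symm
      exact hjk (mem_Ici.mpr (min'_le _ _ (mem_filter.mpr ⟨hjS, mem_Ici.mp hji⟩)))
    calc v i * G v g i = v i * G v g k := by rw [hGk]
      _ ≤ v k * G v g k := mul_le_mul_of_nonneg_right (hv.monotone hik) (G_nonneg hg k)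
      _ ≤ B := hSB k hkS
  · have hGi : G v g i = 0 := by
      rw [G_eq_sum_Ici hv]
      exact sum_eq_zero fun j hj =>
        hg0 j fun hjS => hne ⟨j, mem_filter.mpr ⟨hjS, mem_Ici.mp hj⟩⟩
    rw [hGi, mul_zero]
    exact hB

variable [NeZero n]

lemma le_revSig (v g : Fin n → ℝ) (i : Fin n) : v i * G v g i ≤ revSig v g :=
  le_sup' (fun j => v j * G v g j) (mem_univ i)

lemma revSig_le {g : Fin n → ℝ} {B : ℝ} (h : ∀ i, v i * G v g i ≤ B) : revSig v g ≤ B :=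
  sup'_le _ _ fun i _ => h i

lemma exists_revSig (v g : Fin n → ℝ) : ∃ i, revSig v g = v i * G v g i := by
  obtain ⟨i, -, h⟩ := exists_mem_eq_sup' univ_nonempty fun i => v i * G v g i
  exact ⟨i, h⟩

lemma revSig_le_revZ {f : Fin n → ℝ} (Z : Scheme n f) : revSig v f ≤ revZ v Z := by
  refine revSig_le fun i => ?_
  have hG : G v f i = ∑ q, Z.wt q * G v (Z.sig q) i := by
    rw [← G_sum_mul]
    simp only [Z.bayes]
  rw [hG, mul_sum, revZ]
  refine sum_le_sum fun q _ => ?_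
  rw [mul_left_comm]
  exact mul_le_mul_of_nonneg_left (le_revSig v _ i) (Z.wt_nonneg q)

end Revenue

section Schemes

variable {n : ℕ} {v : Fin n → ℝ}

def SignalEfficient (v g : Fin n → ℝ) : Prop :=
  ∀ i, MinSupp g i → ∀ j, v j * G v g j ≤ v i * G v g i

lemma signalEfficient_of_revSig_le [NeZero n] (hv : Monotone v) {g : Fin n → ℝ}
    (hg : IsSignal g) {m : Fin n} (hm : MinSupp g m) (hrev : revSig v g ≤ v m) :
    SignalEfficient v g := by
  intro i hi j
  rw [le_antisymm (hi.2 m hm.1) (hm.2 i hi.1), G_eq_one_of_minSupp hv hg hm, mul_one]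
  exact (le_revSig v g j).trans hrev

def Scheme.single {f : Fin n → ℝ} (hf : IsSignal f) : Scheme n f where
  Q := 1
  sig _ := f
  wt _ := 1
  sig_isSignal _ := hf
  wt_nonneg _ := zero_le_one
  wt_sum := by simp
  bayes _ := by simp

def Scheme.cons {f f' μ : Fin n → ℝ} (Z : Scheme n f') (hμ : IsSignal μ) {γ : ℝ}
    (hγ0 : 0 ≤ γ) (hγ1 : γ ≤ 1) (hf : ∀ i, γ * μ i + (1 - γ) * f' i = f i) :
    Scheme n f where
  Q := Z.Q + 1
  sig := Fin.cons μ Z.sig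
  wt := Fin.cons γ fun q => (1 - γ) * Z.wt q
  sig_isSignal := Fin.cases hμ Z.sig_isSignal
  wt_nonneg := Fin.cases hγ0 fun q => mul_nonneg (sub_nonneg.mpr hγ1) (Z.wt_nonneg q)
  wt_sum := by rw [Fin.sum_cons, ← mul_sum, Z.wt_sum]; ring
  bayes i := by
    simp only [Fin.sum_univ_succ, Fin.cons_zero, Fin.cons_succ, mul_assoc, ← mul_sum, Z.bayes]
    exact hf i

lemma efficient_single {f : Fin n → ℝ} (hf : IsSignal f) (heff : SignalEfficient v f) :
    Efficient v (Scheme.single hf) :=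
  fun _ _ => heff

lemma efficient_cons {f f' μ : Fin n → ℝ} {Z : Scheme n f'} (hZ : Efficient v Z)
    (hμ : IsSignal μ) (hμeff : SignalEfficient v μ) {γ : ℝ} (hγ0 : 0 ≤ γ) (hγ1 : γ ≤ 1)
    (hf : ∀ i, γ * μ i + (1 - γ) * f' i = f i) :
    Efficient v (Z.cons hμ hγ0 hγ1 hf) := by
  intro q
  induction q using Fin.cases with
  | zero => exact fun _ => hμeff
  | succ q => exact fun hq => hZ q (pos_of_mul_pos_right hq (sub_nonneg.mpr hγ1))

variable [NeZero n]

lemma revZ_single {f : Fin n → ℝ} (hf : IsSignal f) :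
    revZ v (Scheme.single hf) = revSig v f := by
  show ∑ _q : Fin 1, 1 * revSig v f = revSig v f
  simp

lemma revZ_cons {f f' μ : Fin n → ℝ} (Z : Scheme n f') (hμ : IsSignal μ) {γ : ℝ}
    (hγ0 : 0 ≤ γ) (hγ1 : γ ≤ 1) (hf : ∀ i, γ * μ i + (1 - γ) * f' i = f i) :
    revZ v (Z.cons hμ hγ0 hγ1 hf) = γ * revSig v μ + (1 - γ) * revZ v Z := by
  show ∑ q : Fin (Z.Q + 1), _ = _
  simp only [Fin.sum_univ_succ, Scheme.cons, Fin.cons_zero, Fin.cons_succ, mul_assoc, ← mul_sum,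
    revZ]

end Schemes

section EqualRevenue

variable {n : ℕ} {v : Fin n → ℝ} {S : Finset (Fin n)} {m : Fin n}

def upperPart (S : Finset (Fin n)) (j : ℕ) : Finset (Fin n) :=
  S.filter fun k => j ≤ (k : ℕ)

/-- Tail function of the equal-revenue signal on `S` with revenue `v m`: at `j` it is
`v m / v k` for the first `k ∈ S` with `j ≤ k`, so that every price in `S` earns `v m`. -/
noncomputable def erTail (v : Fin n → ℝ) (S : Finset (Fin n)) (m : Fin n) (j : ℕ) : ℝ :=
  if h : (upperPart S j).Nonempty then v m / v ((upperPart S j).min' h) else 0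

noncomputable def erMass (v : Fin n → ℝ) (S : Finset (Fin n)) (m : Fin n) (i : Fin n) : ℝ :=
  erTail v S m i - erTail v S m (i + 1)

lemma erTail_of_le (j : ℕ) (hj : n ≤ j) : erTail v S m j = 0 :=
  dif_neg fun ⟨k, hk⟩ => by have := (mem_filter.mp hk).2; omega

lemma erTail_of_mem {k : Fin n} (hk : k ∈ S) : erTail v S m k = v m / v k := by
  have hkmem : k ∈ upperPart S k := mem_filter.mpr ⟨hk, le_rfl⟩
  have hmin : (upperPart S k).min' ⟨k, hkmem⟩ = k :=
    le_antisymm (min'_le _ _ hkmem) (le_min' _ _ _ fun j hj => Fin.le_def.mpr (mem_filter.mp hj).2)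
  rw [erTail, dif_pos ⟨k, hkmem⟩, hmin]

lemma erTail_succ_of_notMem {k : Fin n} (hk : k ∉ S) :
    erTail v S m (k + 1) = erTail v S m k := by
  have hpart : upperPart S (k + 1) = upperPart S k := by
    ext j
    simp only [upperPart, mem_filter, and_congr_right_iff]
    intro hj
    have : (j : ℕ) ≠ k := fun h => hk (Fin.ext h ▸ hj)
    omega
  simp only [erTail, hpart]

lemma erTail_zero (hvm : v m ≠ 0) (hm : m ∈ S) (hmin : ∀ k ∈ S, m ≤ k) :
    erTail v S m 0 = 1 := by
  have hpart : upperPart S 0 = upperPart S m := by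
    ext j
    simp only [upperPart, mem_filter, Nat.zero_le, and_true]
    exact ⟨fun hj => ⟨hj, hmin j hj⟩, And.left⟩
  have hshift : erTail v S m 0 = erTail v S m m := by simp only [erTail, hpart]
  rw [hshift, erTail_of_mem hm, div_self hvm]

variable (hvpos : ∀ i, 0 < v i)
include hvpos

lemma erTail_nonneg (j : ℕ) : 0 ≤ erTail v S m j := by
  unfold erTail
  split
  · exact (div_pos (hvpos m) (hvpos _)).le
  · exact le_rfl

lemma erTail_antitone (hv : Monotone v) : Antitone (erTail v S m) := by
  intro a b hab
  by_cases hb : (upperPart S b).Nonempty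
  · have hsub : upperPart S b ⊆ upperPart S a := fun k hk =>
      mem_filter.mpr ⟨(mem_filter.mp hk).1, hab.trans (mem_filter.mp hk).2⟩
    have ha : (upperPart S a).Nonempty := hb.mono hsub
    rw [erTail, erTail, dif_pos ha, dif_pos hb]
    exact div_le_div_of_nonneg_left (hvpos m).le (hvpos _) (hv (min'_subset _ hsub))
  · rw [erTail, dif_neg hb]
    exact erTail_nonneg hvpos a

lemma mul_erTail_le (hv : Monotone v) (i : Fin n) : v i * erTail v S m i ≤ v m := by
  unfold erTail
  split
  case isTrue h =>
    have hi : v i ≤ v ((upperPart S i).min' h) :=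
      hv (Fin.le_def.mpr (mem_filter.mp ((upperPart S i).min'_mem h)).2)
    rw [mul_div_assoc', div_le_iff₀ (hvpos _)]
    exact mul_le_mul_of_nonneg_right hi (hvpos m).le |>.trans_eq (mul_comm _ _)
  case isFalse => simpa using (hvpos m).le

lemma erMass_nonneg (hv : Monotone v) (i : Fin n) : 0 ≤ erMass v S m i :=
  sub_nonneg.mpr (erTail_antitone hvpos hv (Nat.le_succ _))

lemma erMass_pos (hv : StrictMono v) {k : Fin n} (hk : k ∈ S) : 0 < erMass v S m k := by
  rw [erMass, erTail_of_mem hk, sub_pos, erTail]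
  split
  case isTrue h =>
    have hlt : k < (upperPart S (k + 1)).min' h := by
      have := (mem_filter.mp ((upperPart S (k + 1)).min'_mem h)).2
      exact Fin.lt_def.mpr this
    exact div_lt_div_of_pos_left (hvpos m) (hvpos k) (hv hlt)
  case isFalse => exact div_pos (hvpos m) (hvpos k)

omit hvpos

lemma erMass_of_notMem {k : Fin n} (hk : k ∉ S) : erMass v S m k = 0 := by
  rw [erMass, erTail_succ_of_notMem hk, sub_self]

lemma sum_Ici_erMass (i : Fin n) : ∑ j ∈ Ici i, erMass v S m j = erTail v S m i := by
  have hIco : ∑ j ∈ Ici i, erMass v S m j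
      = ∑ l ∈ Ico (i : ℕ) n, (erTail v S m l - erTail v S m (l + 1)) := by
    rw [← Fin.map_valEmbedding_Ici, sum_map]
    rfl
  rw [hIco, ← neg_inj, ← sum_neg_distrib]
  simp only [neg_sub]
  rw [sum_Ico_sub _ i.isLt.le, erTail_of_le n le_rfl, zero_sub]

lemma sum_erMass : ∑ i, erMass v S m i = erTail v S m 0 := by
  rw [show ∑ i, erMass v S m i = ∑ l ∈ range n, (erTail v S m l - erTail v S m (l + 1)) from
    Fin.sum_univ_eq_sum_range (fun l => erTail v S m l - erTail v S m (l + 1)) n,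
    sum_range_sub', erTail_of_le n le_rfl, sub_zero]

end EqualRevenue

section EqualRevenueSignal

variable {n : ℕ} {v : Fin n → ℝ} {S : Finset (Fin n)} {m : Fin n}
variable (hv : StrictMono v) (hvpos : ∀ i, 0 < v i)
include hv

lemma G_erMass (i : Fin n) : G v (erMass v S m) i = erTail v S m i := by
  rw [G_eq_sum_Ici hv, sum_Ici_erMass]

variable (hm : m ∈ S)
include hvpos hm

lemma isSignal_erMass (hmin : ∀ k ∈ S, m ≤ k) : IsSignal (erMass v S m) :=
  ⟨erMass_nonneg hvpos hv.monotone, by rw [sum_erMass, erTail_zero (hvpos m).ne' hm hmin]⟩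

lemma minSupp_erMass (hmin : ∀ k ∈ S, m ≤ k) : MinSupp (erMass v S m) m := by
  refine ⟨erMass_pos hvpos hv hm, fun j hj => hmin j ?_⟩
  by_contra hjS
  exact hj.ne' (erMass_of_notMem hjS)

variable [NeZero n]

lemma revSig_erMass : revSig v (erMass v S m) = v m := by
  refine le_antisymm (revSig_le fun i => ?_) ?_
  · rw [G_erMass hv]
    exact mul_erTail_le hvpos hv.monotone i
  · have h := le_revSig v (erMass v S m) m
    rwa [G_erMass hv, erTail_of_mem hm, mul_div_cancel₀ _ (hvpos m).ne'] at h

lemma signalEfficient_erMass (hmin : ∀ k ∈ S, m ≤ k) : SignalEfficient v (erMass v S m) :=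
  signalEfficient_of_revSig_le hv.monotone (isSignal_erMass hv hvpos hm hmin)
    (minSupp_erMass hv hvpos hm hmin) (revSig_erMass hv hvpos hm).le

end EqualRevenueSignal

section Support

variable {n : ℕ} {v : Fin n → ℝ}

noncomputable def posSupp (f : Fin n → ℝ) : Finset (Fin n) := univ.filter (0 < f ·)

lemma mem_posSupp {f : Fin n → ℝ} {k : Fin n} : k ∈ posSupp f ↔ 0 < f k := by
  simp [posSupp]

lemma exists_minSupp {f : Fin n → ℝ} (hf : IsSignal f) : ∃ m, MinSupp f m := by
  have hne : (posSupp f).Nonempty := by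
    by_contra hempty
    have hzero : ∑ i, f i = 0 := sum_eq_zero fun i _ =>
      le_antisymm (not_lt.mp fun hi => hempty ⟨i, mem_posSupp.mpr hi⟩) (hf.1 i)
    exact one_ne_zero (hf.2.symm.trans hzero)
  exact ⟨(posSupp f).min' hne, mem_posSupp.mp ((posSupp f).min'_mem hne),
    fun j hj => min'_le _ _ (mem_posSupp.mpr hj)⟩

lemma MinSupp.mem_posSupp {f : Fin n → ℝ} {m : Fin n} (hm : MinSupp f m) : m ∈ posSupp f :=
  PD.mem_posSupp.mpr hm.1

lemma MinSupp.le_of_mem_posSupp {f : Fin n → ℝ} {m : Fin n} (hm : MinSupp f m) :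
    ∀ k ∈ posSupp f, m ≤ k :=
  fun k hk => hm.2 k (PD.mem_posSupp.mp hk)

lemma exists_max_mul_le {ι : Type*} {S : Finset ι} (hS : S.Nonempty) {f μ : ι → ℝ}
    (hf : ∀ k, 0 ≤ f k) (hμS : ∀ k ∈ S, 0 < μ k) (hμ : ∀ k ∉ S, μ k = 0) :
    ∃ k₀ ∈ S, ∀ k, f k₀ / μ k₀ * μ k ≤ f k := by
  obtain ⟨k₀, hk₀, hmin⟩ := exists_min_image S (fun k => f k / μ k) hS
  refine ⟨k₀, hk₀, fun k => ?_⟩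
  by_cases hk : k ∈ S
  · exact (le_div_iff₀ (hμS k hk)).mp (hmin k hk)
  · rw [hμ k hk, mul_zero]
    exact hf k

lemma lt_one_of_mul_le {f μ : Fin n → ℝ} (hf : IsSignal f) (hμ : IsSignal μ) (hne : f ≠ μ)
    {γ : ℝ} (hγ : ∀ i, γ * μ i ≤ f i) : γ < 1 := by
  by_contra! hγ1
  have hle : ∀ i, μ i ≤ f i := fun i => (le_mul_of_one_le_left (hμ.1 i) hγ1).trans (hγ i)
  have hsum : ∑ i, (f i - μ i) = 0 := by rw [sum_sub_distrib, hf.2, hμ.2, sub_self]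
  refine hne (funext fun i => ?_)
  have := (sum_eq_zero_iff_of_nonneg fun j _ => sub_nonneg.mpr (hle j)).mp hsum i (mem_univ i)
  linarith

end Support

section Decomposition

variable {n : ℕ} [NeZero n] {v : Fin n → ℝ} {f : Fin n → ℝ} {m : Fin n}
variable (hv : StrictMono v) (hvpos : ∀ i, 0 < v i) (hf : IsSignal f) (hm : MinSupp f m)
include hv hvpos hf hm

/-- Under the equal-revenue signal every supported price earns exactly `v m`, and by
`mul_G_le_of_forall_mem` only supported prices matter. -/
lemma mul_revSig_residual_le {γ : ℝ} {f' : Fin n → ℝ} (hγ0 : 0 ≤ γ) (hγ1 : γ ≤ 1)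
    (hf' : ∀ i, 0 ≤ f' i)
    (hdec : ∀ i, γ * erMass v (posSupp f) m i + (1 - γ) * f' i = f i) :
    (1 - γ) * revSig v f' ≤ revSig v f - γ * v m := by
  have hμ0 : ∀ i, 0 ≤ γ * erMass v (posSupp f) m i :=
    fun i => mul_nonneg hγ0 (erMass_nonneg hvpos hv.monotone i)
  have hG : ∀ i, G v f i = γ * erTail v (posSupp f) m i + (1 - γ) * G v f' i := by
    intro i
    rw [← G_erMass hv, ← G_add_mul]
    simp only [hdec]
  have hvm : v m ≤ revSig v f := by
    simpa [G_eq_one_of_minSupp hv.monotone hf hm] using le_revSig v f m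
  obtain ⟨i, hi⟩ := exists_revSig v f'
  rw [hi, mul_left_comm, ← G_const_mul]
  refine mul_G_le_of_forall_mem hv (fun j => mul_nonneg (sub_nonneg.mpr hγ1) (hf' j))
    (fun j hj => mem_posSupp.mpr ((hdec j).symm ▸ add_pos_of_nonneg_of_pos (hμ0 j) hj)) ?_
    (fun k hk => ?_) i
  · nlinarith [hvpos m]
  · rw [G_const_mul, ← sub_eq_of_eq_add' (hG k), mul_sub, mul_left_comm,
      erTail_of_mem hk, mul_div_cancel₀ _ (hvpos k).ne']
    linarith [le_revSig v f k]

/-- `γ` is the largest multiple of the equal-revenue signal `μ` that fits under `f`, so the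
residual vanishes where `f / μ` is smallest. -/
lemma exists_erMass_decomposition (hlow : v m < revSig v f) :
    ∃ γ f', 0 < γ ∧ γ < 1 ∧ IsSignal f' ∧ (posSupp f').card < (posSupp f).card ∧
      ∀ i, γ * erMass v (posSupp f) m i + (1 - γ) * f' i = f i := by
  set μ := erMass v (posSupp f) m
  have hμ : IsSignal μ := isSignal_erMass hv hvpos hm.mem_posSupp hm.le_of_mem_posSupp
  have hμpos : ∀ k ∈ posSupp f, 0 < μ k := fun k hk => erMass_pos hvpos hv hk
  obtain ⟨k₀, hk₀, hγμ⟩ := exists_max_mul_le ⟨m, hm.mem_posSupp⟩ hf.1 hμpos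
    fun k hk => erMass_of_notMem hk
  set γ := f k₀ / μ k₀
  have hγ0 : 0 < γ := div_pos (mem_posSupp.mp hk₀) (hμpos k₀ hk₀)
  have hγ1 : γ < 1 := by
    refine lt_one_of_mul_le hf hμ (fun hfμ => ?_) hγμ
    rw [hfμ, revSig_erMass hv hvpos hm.mem_posSupp] at hlow
    exact lt_irrefl _ hlow
  have h1γ : 0 < 1 - γ := sub_pos.mpr hγ1
  refine ⟨γ, fun i => (f i - γ * μ i) / (1 - γ), hγ0, hγ1,
    ⟨fun i => div_nonneg (sub_nonneg.mpr (hγμ i)) h1γ.le, ?_⟩, ?_, fun i => ?_⟩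
  · rw [← sum_div, sum_sub_distrib, ← mul_sum, hf.2, hμ.2, mul_one, div_self h1γ.ne']
  · refine (card_le_card fun k hk => ?_).trans_lt (card_erase_lt_of_mem hk₀)
    have hk : γ * μ k < f k := sub_pos.mp ((div_pos_iff_of_pos_right h1γ).mp (mem_posSupp.mp hk))
    refine mem_erase.mpr
      ⟨fun hkk₀ => ?_, mem_posSupp.mpr ((mul_nonneg hγ0.le (hμ.1 k)).trans_lt hk)⟩
    rw [hkk₀, div_mul_cancel₀ _ (hμpos k₀ hk₀).ne'] at hk
    exact lt_irrefl _ hk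
  · field_simp
    ring

end Decomposition

theorem exists_efficient_scheme_revZ_le {n : ℕ} [NeZero n] {v : Fin n → ℝ} (hv : StrictMono v)
    (hvpos : ∀ i, 0 < v i) {f : Fin n → ℝ} (hf : IsSignal f) :
    ∃ Z : Scheme n f, Efficient v Z ∧ revZ v Z ≤ revSig v f := by
  induction hN : (posSupp f).card using Nat.strong_induction_on generalizing f with
  | _ N ih =>
  obtain ⟨m, hm⟩ := exists_minSupp hf
  by_cases hlow : revSig v f ≤ v m
  · exact ⟨Scheme.single hf, efficient_single hf
      (signalEfficient_of_revSig_le hv.monotone hf hm hlow), (revZ_single hf).le⟩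
  obtain ⟨γ, f', hγ0, hγ1, hf', hcard, hdec⟩ :=
    exists_erMass_decomposition hv hvpos hf hm (not_le.mp hlow)
  obtain ⟨Z', hZ', hrev'⟩ := ih _ (hN ▸ hcard) hf' rfl
  have hμ := isSignal_erMass hv hvpos hm.mem_posSupp hm.le_of_mem_posSupp
  refine ⟨Z'.cons hμ hγ0.le hγ1.le hdec, efficient_cons hZ' hμ
    (signalEfficient_erMass hv hvpos hm.mem_posSupp hm.le_of_mem_posSupp) _ _ _, ?_⟩
  rw [revZ_cons, revSig_erMass hv hvpos hm.mem_posSupp]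
  have := mul_revSig_residual_le hv hvpos hf hm hγ0.le hγ1.le hf'.1 hdec
  linarith [mul_le_mul_of_nonneg_left hrev' (sub_nonneg.mpr hγ1.le)]

theorem stmt4 (n : ℕ) [NeZero n] (v f : Fin n → ℝ)
    (hv : StrictMono v) (hvpos : ∀ i, 0 < v i)
    (hf : ∀ i, 0 < f i) (hsum : ∑ i, f i = 1) :
    ∃ Z : Scheme n f, Efficient v Z ∧ revZ v Z = revSig v f := by
  obtain ⟨Z, hZ, hrev⟩ :=
    exists_efficient_scheme_revZ_le hv hvpos ⟨fun i => (hf i).le, hsum⟩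
  exact ⟨Z, hZ, le_antisymm hrev (revSig_le_revZ Z)⟩

end PD
end

section
/- Let P be a probability distribution on the values {v₁,…,vₙ} (with 0 < v₁ < ⋯ < vₙ) and let k ∈ [n] with Σ_{i≤k} f_P(vᵢ) > 0. Let P̄ be P conditioned on values at most v_k, i.e., f_{P̄}(vᵢ) = f_P(vᵢ)/Σ_{j≤k} f_P(vⱼ) for i ≤ k and f_{P̄}(vᵢ) = 0 for i > k. If p* is the smallest value in {v₁,…,vₙ} maximizing v·G_P(v) and p̂* is the smallest value maximizing v·G_{P̄}(v), then p̂* ≤ p*. -/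
open Finset MeasureTheory

namespace PD

lemma priceIdx_mem {n : ℕ} [NeZero n] (v fS : Fin n → ℝ) :
    priceIdx v fS ∈ Finset.univ.filter (fun i => ∀ j, v j * G v fS j ≤ v i * G v fS i) :=
  Finset.min'_mem _ _

lemma priceIdx_spec {n : ℕ} [NeZero n] (v fS : Fin n → ℝ) (j : Fin n) :
    v j * G v fS j ≤ v (priceIdx v fS) * G v fS (priceIdx v fS) :=
  (Finset.mem_filter.mp (priceIdx_mem v fS)).2 j

lemma priceIdx_le {n : ℕ} [NeZero n] {v fS : Fin n → ℝ} {i : Fin n}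
    (hi : ∀ j, v j * G v fS j ≤ v i * G v fS i) : priceIdx v fS ≤ i :=
  Finset.min'_le _ _ (Finset.mem_filter.mpr ⟨Finset.mem_univ _, hi⟩)

theorem stmt9 (n : ℕ) [NeZero n] (v : Fin n → ℝ)
    (hv : StrictMono v) (hvpos : ∀ i, 0 < v i)
    (fP : Fin n → ℝ) (hP : IsSignal fP) (k : Fin n)
    (hk : 0 < ∑ j ∈ Finset.univ.filter (fun j => j ≤ k), fP j) :
    v (priceIdx v (fun i =>
        if i ≤ k then fP i / (∑ j ∈ Finset.univ.filter (fun j => j ≤ k), fP j) else 0))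
      ≤ v (priceIdx v fP) := by
  classical
  set S := ∑ j ∈ Finset.univ.filter (fun j => j ≤ k), fP j with hS
  set T := ∑ j ∈ Finset.univ.filter (fun j => k < j), fP j with hTdef
  set fB : Fin n → ℝ := fun i => if i ≤ k then fP i / S else 0 with hfB
  have hT0 : 0 ≤ T := Finset.sum_nonneg fun j _ => hP.1 j
  have hSne : S ≠ 0 := ne_of_gt hk
  have hBnn : ∀ j, 0 ≤ fB j := by
    intro j
    simp only [hfB]
    split
    · exact div_nonneg (hP.1 j) hk.le
    · exact le_refl 0
  -- rewrite G filters via indices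
  have hGidx : ∀ (fS : Fin n → ℝ) (i : Fin n),
      G v fS i = ∑ j ∈ Finset.univ.filter (fun j => i ≤ j), fS j := by
    intro fS i
    unfold G
    congr 1
    ext j
    simp [hv.le_iff_le]
  have hGrel : ∀ i : Fin n, i ≤ k → G v fP i = S * G v fB i + T := by
    intro i hik
    rw [hGidx, hGidx]
    have h1 : (Finset.univ.filter (fun j => i ≤ j)) =
        (Finset.univ.filter (fun j => i ≤ j ∧ j ≤ k)) ∪
          (Finset.univ.filter (fun j : Fin n => k < j)) := by
      ext j
      simp only [Finset.mem_filter, Finset.mem_union, Finset.mem_univ, true_and]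
      constructor
      · intro h
        by_cases hjk : j ≤ k
        · exact Or.inl ⟨h, hjk⟩
        · exact Or.inr (lt_of_not_ge hjk)
      · rintro (⟨h, _⟩ | h)
        · exact h
        · exact le_trans hik h.le
    have hdisj : Disjoint (Finset.univ.filter (fun j => i ≤ j ∧ j ≤ k))
        (Finset.univ.filter (fun j : Fin n => k < j)) := by
      rw [Finset.disjoint_left]
      intro j hj hj'
      rw [Finset.mem_filter] at hj hj'
      exact absurd hj'.2 (not_lt.mpr hj.2.2)
    have hfBsum : S * ∑ j ∈ Finset.univ.filter (fun j => i ≤ j), fB j =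
        ∑ j ∈ Finset.univ.filter (fun j => i ≤ j ∧ j ≤ k), fP j := by
      rw [Finset.mul_sum,
        show (Finset.univ.filter (fun j => i ≤ j ∧ j ≤ k)) =
          (Finset.univ.filter (fun j => i ≤ j)).filter (fun j => j ≤ k) by
            ext j; simp [and_assoc]]
      conv_rhs => rw [Finset.sum_filter]
      apply Finset.sum_congr rfl
      intro j _
      simp only [hfB]
      split
      · rw [mul_div_cancel₀ _ hSne]
      · simp
    rw [hfBsum, h1, Finset.sum_union hdisj]
  set p := priceIdx v fP with hp
  set q := priceIdx v fB with hq
  by_contra hcon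
  push_neg at hcon
  have hpq : p < q := by
    rw [← hv.lt_iff_lt]; exact hcon
  -- q ≤ k
  have hqk : q ≤ k := by
    by_contra hqk
    push_neg at hqk
    have hGq : G v fB q = 0 := by
      rw [hGidx]
      apply Finset.sum_eq_zero
      intro j hj
      rw [Finset.mem_filter] at hj
      have : ¬ j ≤ k := not_le.mpr (lt_of_lt_of_le hqk hj.2)
      simp [hfB, this]
    obtain ⟨j₀, hj₀mem, hj₀⟩ : ∃ j₀ ∈ Finset.univ.filter (fun j => j ≤ k), 0 < fP j₀ := by
      by_contra h
      push_neg at h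
      have : S = 0 := Finset.sum_eq_zero fun j hj =>
        le_antisymm (h j hj) (hP.1 j)
      exact hSne this
    rw [Finset.mem_filter] at hj₀mem
    have hBj₀ : 0 < fB j₀ := by
      simp only [hfB, if_pos hj₀mem.2]
      exact div_pos hj₀ hk
    have hGj₀ : fB j₀ ≤ G v fB j₀ := by
      rw [hGidx]
      exact Finset.single_le_sum (fun j _ => hBnn j)
        (Finset.mem_filter.mpr ⟨Finset.mem_univ _, le_refl _⟩)
    have := priceIdx_spec v fB j₀
    rw [← hq, hGq, mul_zero] at this
    have : 0 < v j₀ * G v fB j₀ :=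
      mul_pos (hvpos j₀) (lt_of_lt_of_le hBj₀ hGj₀)
    linarith [priceIdx_spec v fB j₀, hGq]
  have hpk : p ≤ k := le_of_lt (lt_of_lt_of_le hpq hqk)
  -- p is not a maximizer for fB: strict inequality
  have hstrict : v p * G v fB p < v q * G v fB q := by
    by_contra h
    push_neg at h
    have hmax : ∀ j, v j * G v fB j ≤ v p * G v fB p := fun j =>
      le_trans (priceIdx_spec v fB j) h
    exact absurd (priceIdx_le hmax) (not_le.mpr hpq)
  have hPmax : v q * G v fP q ≤ v p * G v fP p := priceIdx_spec v fP q
  rw [hGrel p hpk, hGrel q hqk] at hPmax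
  have hvlt : v p < v q := hcon
  nlinarith [mul_pos hk (sub_pos.mpr hstrict), mul_nonneg hT0 (sub_pos.mpr hvlt).le]

end PD
end

section
/- Let Z₀ be a signaling scheme in which every signal is either a singleton signal or an equal-revenue binary signal. Fix k ∈ [n] and i* ∈ [k], and suppose: (a) every equal-revenue binary signal (with positive weight) whose taker value is at most v_k has giver value at most v_{i*}; (b) for each i < i*, the total giver mass at vᵢ over all equal-revenue binary signals with taker value at most v_k equals f_𝒟(vᵢ)/2; (c) for each i with i* < i ≤ k, the total taker mass at vᵢ over all equal-revenue binary signals equals f_𝒟(vᵢ)/2. Then both of the following hold: 2·Σ_{i=1}^k f_𝒟(vᵢ)·cs_{vᵢ}(Z₀) ≥ V_{i*−1}, and 2·Σ_{i=1}^k f_𝒟(vᵢ)·cs_{vᵢ}(Z₀) ≥ V_k − V_{i*−1} − max_{i∈[k]} ( vᵢ · Σ_{j=i}^k f_𝒟(vⱼ) ), where V_k = Σ_{i=1}^k vᵢ·f_𝒟(vᵢ) and V₀ = 0. -/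
open Finset MeasureTheory

namespace PD

section Aux

variable {n : ℕ}

lemma priceIdx_eq [NeZero n] (v fS : Fin n → ℝ) (i : Fin n)
    (hmax : ∀ j, v j * G v fS j ≤ v i * G v fS i)
    (hmin : ∀ x, (∀ j, v j * G v fS j ≤ v x * G v fS x) → i ≤ x) :
    priceIdx v fS = i := by
  unfold priceIdx
  apply le_antisymm
  · exact Finset.min'_le _ _ (by simpa using hmax)
  · apply Finset.le_min'
    intro x hx
    exact hmin x (by simpa using hx)

lemma G_singleton (v : Fin n → ℝ) (i j : Fin n) :
    G v (fun l => if l = i then (1:ℝ) else 0) j = if v j ≤ v i then 1 else 0 := by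
  unfold G
  rw [Finset.sum_ite_eq' (Finset.univ.filter fun l => v j ≤ v l) i (fun _ => (1:ℝ))]
  simp

lemma priceIdx_singleton [NeZero n] (v : Fin n → ℝ) (hv : StrictMono v)
    (hvpos : ∀ i, 0 < v i) (i : Fin n) :
    priceIdx v (fun l => if l = i then (1:ℝ) else 0) = i := by
  apply priceIdx_eq
  · intro j
    rw [G_singleton, G_singleton]
    by_cases h : v j ≤ v i
    · simp [h]
    · simp [h]
      exact le_of_lt (hvpos i)
  · intro x hx
    by_contra hlt
    push_neg at hlt
    have h1 := hx i
    rw [G_singleton, G_singleton] at h1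
    have hxi : v x < v i := hv hlt
    simp [le_of_lt hxi] at h1
    linarith

lemma G_binary (v : Fin n → ℝ) (g t j : Fin n) (hgt : g ≠ t) :
    G v (fun l => if l = g then 1 - v g / v t else if l = t then v g / v t else 0) j =
      (if v j ≤ v g then 1 - v g / v t else 0) + (if v j ≤ v t then v g / v t else 0) := by
  unfold G
  have : ∀ l : Fin n,
      (if l = g then 1 - v g / v t else if l = t then v g / v t else 0) =
      (if l = g then 1 - v g / v t else 0) + (if l = t then v g / v t else 0) := by
    intro l
    by_cases h1 : l = g
    · subst h1; simp [hgt]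
    · by_cases h2 : l = t <;> simp [h1, h2, Ne.symm hgt]
  rw [Finset.sum_congr rfl (fun l _ => this l), Finset.sum_add_distrib,
    Finset.sum_ite_eq' (Finset.univ.filter fun l => v j ≤ v l) g (fun _ => 1 - v g / v t),
    Finset.sum_ite_eq' (Finset.univ.filter fun l => v j ≤ v l) t (fun _ => v g / v t)]
  simp

lemma priceIdx_binary [NeZero n] (v : Fin n → ℝ) (hv : StrictMono v)
    (hvpos : ∀ i, 0 < v i) (g t : Fin n) (hgt : v g < v t) :
    priceIdx v (fun l => if l = g then 1 - v g / v t else if l = t then v g / v t else 0) = g := by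
  have hgt' : g ≠ t := by
    intro h; subst h; exact lt_irrefl _ hgt
  have htpos := hvpos t
  have hgpos := hvpos g
  have hGg : (if v g ≤ v g then 1 - v g / v t else 0) + (if v g ≤ v t then v g / v t else 0)
      = 1 := by simp [le_of_lt hgt]
  apply priceIdx_eq
  · intro j
    rw [G_binary v g t j hgt', G_binary v g t g hgt', hGg, mul_one]
    by_cases h1 : v j ≤ v g
    · simp [h1, le_trans h1 (le_of_lt hgt)]
    · by_cases h2 : v j ≤ v t
      · simp [h1, h2]
        have h3 : v t * (v g / v t) = v g := by field_simp
        nlinarith [div_nonneg (le_of_lt hgpos) (le_of_lt htpos)]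
      · simp [h1, h2]
        exact le_of_lt hgpos
  · intro x hx
    by_contra hlt
    push_neg at hlt
    have h1 := hx g
    rw [G_binary v g t g hgt', G_binary v g t x hgt', hGg, mul_one] at h1
    have hxg : v x < v g := hv hlt
    have hxt : v x ≤ v t := le_trans (le_of_lt hxg) (le_of_lt hgt)
    simp [le_of_lt hxg, hxt] at h1
    linarith

end Aux

theorem stmt12 (n : ℕ) [NeZero n] (v f : Fin n → ℝ)
    (hv : StrictMono v) (hvpos : ∀ i, 0 < v i)
    (hf : ∀ i, 0 < f i) (hsum : ∑ i, f i = 1)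
    (Z : Scheme n f)
    -- every signal is a singleton or an equal-revenue binary signal, with the
    -- binary ones having explicit giver index `giv q` and taker index `tak q`
    (isBin : Fin Z.Q → Bool) (giv tak : Fin Z.Q → Fin n)
    (hbin : ∀ q, isBin q = true → v (giv q) < v (tak q) ∧
      Z.sig q = fun l => if l = giv q then 1 - v (giv q) / v (tak q)
                         else if l = tak q then v (giv q) / v (tak q) else 0)
    (hsing : ∀ q, isBin q = false → IsSingleton (Z.sig q))
    (k iStar : Fin n) (hik : iStar ≤ k)
    -- (a) every positive-weight binary signal with taker value ≤ v_k has giver value ≤ v_{i*}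
    (ha : ∀ q, isBin q = true → 0 < Z.wt q → v (tak q) ≤ v k → v (giv q) ≤ v iStar)
    -- (b) for i < i*, the total giver mass at v_i over binary signals with taker ≤ v_k is f i / 2
    (hb : ∀ i : Fin n, i < iStar →
      ∑ q ∈ Finset.univ.filter (fun q => isBin q = true ∧ giv q = i ∧ tak q ≤ k),
          Z.wt q * (1 - v (giv q) / v (tak q)) = f i / 2)
    -- (c) for i* < i ≤ k, the total taker mass at v_i over binary signals is f i / 2
    (hc : ∀ i : Fin n, iStar < i → i ≤ k →
      ∑ q ∈ Finset.univ.filter (fun q => isBin q = true ∧ tak q = i),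
          Z.wt q * (v (giv q) / v (tak q)) = f i / 2) :
    (∑ i ∈ Finset.univ.filter (fun i => i < iStar), v i * f i) ≤
        2 * ∑ i ∈ Finset.univ.filter (fun i => i ≤ k), f i * csZ v f Z i ∧
    (∑ i ∈ Finset.univ.filter (fun i => i ≤ k), v i * f i) -
        (∑ i ∈ Finset.univ.filter (fun i => i < iStar), v i * f i) -
        (Finset.univ.filter (fun i => i ≤ k)).sup'
          ⟨k, by simp⟩
          (fun i => v i * ∑ j ∈ Finset.univ.filter (fun j => i ≤ j ∧ j ≤ k), f j)
      ≤ 2 * ∑ i ∈ Finset.univ.filter (fun i => i ≤ k), f i * csZ v f Z i := by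
  classical
  -- pointwise computation of cs * sig
  have key : ∀ q i, cs v (Z.sig q) i * Z.sig q i =
      if isBin q = true ∧ i = tak q then
        (v (giv q) / v (tak q)) * (v (tak q) - v (giv q)) else 0 := by
    intro q i
    by_cases hq : isBin q = true
    · obtain ⟨hlt, hsig⟩ := hbin q hq
      have hne : giv q ≠ tak q := fun h => by rw [h] at hlt; exact lt_irrefl _ hlt
      rw [hsig]
      unfold cs
      rw [priceIdx_binary v hv hvpos _ _ hlt]
      by_cases h1 : i = giv q
      · subst h1
        simp [hq, hne]
      · by_cases h2 : i = tak q
        · subst h2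
          simp [hq, h1, le_of_lt hlt, Ne.symm hne]
          ring
        · simp [hq, h1, h2]
    · obtain ⟨j, hj⟩ := hsing q (by simpa using hq)
      rw [hj]
      unfold cs
      rw [priceIdx_singleton v hv hvpos j]
      by_cases h1 : i = j
      · subst h1; simp [hq]
      · simp [hq, h1]
  -- the weighted surplus sum as a sum over signals
  have hSB : ∑ i ∈ Finset.univ.filter (fun i => i ≤ k), f i * csZ v f Z i =
      ∑ q, (if isBin q = true ∧ tak q ≤ k then
        Z.wt q * ((v (giv q) / v (tak q)) * (v (tak q) - v (giv q))) else 0) := by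
    have h1 : ∀ i, f i * csZ v f Z i = ∑ q, Z.wt q * (cs v (Z.sig q) i * Z.sig q i) := by
      intro i
      unfold csZ
      rw [Finset.mul_sum]
      refine Finset.sum_congr rfl (fun q _ => ?_)
      field_simp [(hf i).ne']
    calc ∑ i ∈ Finset.univ.filter (fun i => i ≤ k), f i * csZ v f Z i
        = ∑ i ∈ Finset.univ.filter (fun i => i ≤ k),
            ∑ q, Z.wt q * (cs v (Z.sig q) i * Z.sig q i) :=
          Finset.sum_congr rfl (fun i _ => h1 i)
      _ = ∑ q, ∑ i ∈ Finset.univ.filter (fun i => i ≤ k),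
            Z.wt q * (cs v (Z.sig q) i * Z.sig q i) := Finset.sum_comm
      _ = _ := by
          refine Finset.sum_congr rfl (fun q _ => ?_)
          by_cases hq : isBin q = true
          · have e2 : ∀ i ∈ Finset.univ.filter (fun i => i ≤ k),
                Z.wt q * (cs v (Z.sig q) i * Z.sig q i) =
                if i = tak q then
                  Z.wt q * ((v (giv q) / v (tak q)) * (v (tak q) - v (giv q))) else 0 := by
              intro i _
              rw [key q i]
              by_cases h : i = tak q
              · simp [h, hq]
              · simp [h, hq]
            rw [Finset.sum_congr rfl e2, Finset.sum_ite_eq']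
            by_cases ht : tak q ≤ k
            · simp [hq, ht]
            · simp [hq, ht]
          · have e2 : ∀ i ∈ Finset.univ.filter (fun i => i ≤ k),
                Z.wt q * (cs v (Z.sig q) i * Z.sig q i) = 0 := by
              intro i _
              rw [key q i]
              simp [hq]
            rw [Finset.sum_congr rfl e2]
            simp [hq]
  have hBnonneg : ∀ q, 0 ≤ (if isBin q = true ∧ tak q ≤ k then
      Z.wt q * ((v (giv q) / v (tak q)) * (v (tak q) - v (giv q))) else 0) := by
    intro q
    by_cases h : isBin q = true ∧ tak q ≤ k
    · rw [if_pos h]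
      have hlt := (hbin q h.1).1
      have hw := Z.wt_nonneg q
      have h1 : 0 ≤ v (giv q) / v (tak q) :=
        div_nonneg (le_of_lt (hvpos _)) (le_of_lt (hvpos _))
      have h2 : 0 ≤ v (tak q) - v (giv q) := by linarith
      positivity
    · rw [if_neg h]
  constructor
  · -- first inequality
    rw [hSB, Finset.mul_sum]
    have step : ∀ i ∈ Finset.univ.filter (fun i => i < iStar),
        v i * f i = ∑ q, (if isBin q = true ∧ giv q = i ∧ tak q ≤ k then
          2 * (v i * (Z.wt q * (1 - v (giv q) / v (tak q)))) else 0) := by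
      intro i hi
      rw [Finset.mem_filter] at hi
      have hbi := hb i hi.2
      have h0 : v i * f i = 2 * (v i * (f i / 2)) := by ring
      rw [h0, ← hbi, Finset.mul_sum, Finset.mul_sum, Finset.sum_filter]
    rw [Finset.sum_congr rfl step, Finset.sum_comm]
    apply Finset.sum_le_sum
    intro q _
    by_cases hq : isBin q = true
    · by_cases ht : tak q ≤ k
      · have e2 : ∀ i ∈ Finset.univ.filter (fun i => i < iStar),
            (if isBin q = true ∧ giv q = i ∧ tak q ≤ k then
              2 * (v i * (Z.wt q * (1 - v (giv q) / v (tak q)))) else 0) =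
            if giv q = i then
              2 * (v (giv q) * (Z.wt q * (1 - v (giv q) / v (tak q)))) else 0 := by
          intro i _
          by_cases h : giv q = i
          · subst h; simp [hq, ht]
          · simp [h]
        rw [Finset.sum_congr rfl e2, Finset.sum_ite_eq]
        rw [if_pos (show (isBin q = true ∧ tak q ≤ k) from ⟨hq, ht⟩)]
        by_cases hg : giv q < iStar
        · rw [if_pos (by simp [hg])]
          have hlt := (hbin q hq).1
          have htne : v (tak q) ≠ 0 := ne_of_gt (hvpos _)
          have : v (giv q) * (Z.wt q * (1 - v (giv q) / v (tak q))) =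
              Z.wt q * (v (giv q) / v (tak q) * (v (tak q) - v (giv q))) := by
            field_simp
          rw [this]
        · rw [if_neg (by simpa using hg)]
          have := hBnonneg q
          rw [if_pos (show (isBin q = true ∧ tak q ≤ k) from ⟨hq, ht⟩)] at this
          linarith
      · have e2 : ∀ i ∈ Finset.univ.filter (fun i => i < iStar),
            (if isBin q = true ∧ giv q = i ∧ tak q ≤ k then
              2 * (v i * (Z.wt q * (1 - v (giv q) / v (tak q)))) else 0) = 0 := by
          intro i _
          rw [if_neg (by tauto)]
        rw [Finset.sum_congr rfl e2, Finset.sum_const_zero]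
        have := hBnonneg q
        linarith
    · have e2 : ∀ i ∈ Finset.univ.filter (fun i => i < iStar),
          (if isBin q = true ∧ giv q = i ∧ tak q ≤ k then
            2 * (v i * (Z.wt q * (1 - v (giv q) / v (tak q)))) else 0) = 0 := by
        intro i _
        rw [if_neg (by tauto)]
      rw [Finset.sum_congr rfl e2, Finset.sum_const_zero]
      have := hBnonneg q
      linarith
  · -- second inequality
    have hM : v iStar * ∑ j ∈ Finset.univ.filter (fun j => iStar ≤ j ∧ j ≤ k), f j ≤
        (Finset.univ.filter (fun i => i ≤ k)).sup'
          ⟨k, by simp⟩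
          (fun i => v i * ∑ j ∈ Finset.univ.filter (fun j => i ≤ j ∧ j ≤ k), f j) := by
      exact Finset.le_sup' (fun i => v i * ∑ j ∈ Finset.univ.filter (fun j => i ≤ j ∧ j ≤ k), f j) (show iStar ∈ Finset.univ.filter (fun i => i ≤ k) from Finset.mem_filter.mpr ⟨Finset.mem_univ _, hik⟩)
    have hsplit : ∑ i ∈ Finset.univ.filter (fun i => i ≤ k), v i * f i -
        ∑ i ∈ Finset.univ.filter (fun i => i < iStar), v i * f i =
        ∑ i ∈ Finset.univ.filter (fun i => iStar ≤ i ∧ i ≤ k), v i * f i := by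
      have h1 : Finset.univ.filter (fun i : Fin n => i ≤ k) =
          Finset.univ.filter (fun i => i < iStar) ∪
          Finset.univ.filter (fun i => iStar ≤ i ∧ i ≤ k) := by
        ext i
        simp only [Finset.mem_union, Finset.mem_filter, Finset.mem_univ, true_and]
        constructor
        · intro h
          by_cases h2 : i < iStar
          · exact Or.inl h2
          · exact Or.inr ⟨not_lt.mp h2, h⟩
        · intro h
          rcases h with h | h
          · exact le_of_lt (lt_of_lt_of_le h hik)
          · exact h.2
      have h2 : Disjoint (Finset.univ.filter (fun i : Fin n => i < iStar))
          (Finset.univ.filter (fun i => iStar ≤ i ∧ i ≤ k)) := by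
        rw [Finset.disjoint_left]
        intro i hi1 hi2
        rw [Finset.mem_filter] at hi1 hi2
        exact absurd hi2.2.1 (not_le.mpr hi1.2)
      rw [h1, Finset.sum_union h2]
      ring
    have key2 : ∑ i ∈ Finset.univ.filter (fun i => iStar ≤ i ∧ i ≤ k), v i * f i -
        v iStar * ∑ j ∈ Finset.univ.filter (fun j => iStar ≤ j ∧ j ≤ k), f j ≤
        2 * ∑ i ∈ Finset.univ.filter (fun i => i ≤ k), f i * csZ v f Z i := by
      rw [hSB, Finset.mul_sum, Finset.mul_sum, ← Finset.sum_sub_distrib]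
      have hAA : Finset.univ.filter (fun i : Fin n => iStar < i ∧ i ≤ k) =
          (Finset.univ.filter (fun i : Fin n => iStar ≤ i ∧ i ≤ k)).erase iStar := by
        ext i
        simp only [Finset.mem_erase, Finset.mem_filter, Finset.mem_univ, true_and]
        constructor
        · intro h
          exact ⟨ne_of_gt h.1, le_of_lt h.1, h.2⟩
        · intro h
          exact ⟨lt_of_le_of_ne h.2.1 (Ne.symm h.1), h.2.2⟩
      have hstep1 : ∑ i ∈ Finset.univ.filter (fun i => iStar ≤ i ∧ i ≤ k),
          (v i * f i - v iStar * f i) =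
          ∑ i ∈ Finset.univ.filter (fun i => iStar < i ∧ i ≤ k),
          (v i * f i - v iStar * f i) := by
        rw [hAA]
        rw [Finset.sum_erase]
        ring
      rw [hstep1]
      have hstep2 : ∀ i ∈ Finset.univ.filter (fun i : Fin n => iStar < i ∧ i ≤ k),
          v i * f i - v iStar * f i =
          ∑ q, (if isBin q = true ∧ tak q = i then
            2 * ((v i - v iStar) * (Z.wt q * (v (giv q) / v (tak q)))) else 0) := by
        intro i hi
        rw [Finset.mem_filter] at hi
        have hci := hc i hi.2.1 hi.2.2
        have h0 : v i * f i - v iStar * f i = 2 * ((v i - v iStar) * (f i / 2)) := by ring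
        rw [h0, ← hci, Finset.mul_sum, Finset.mul_sum, Finset.sum_filter]
      rw [Finset.sum_congr rfl hstep2, Finset.sum_comm]
      apply Finset.sum_le_sum
      intro q _
      by_cases hq : isBin q = true
      · have e2 : ∀ i ∈ Finset.univ.filter (fun i : Fin n => iStar < i ∧ i ≤ k),
            (if isBin q = true ∧ tak q = i then
              2 * ((v i - v iStar) * (Z.wt q * (v (giv q) / v (tak q)))) else 0) =
            if tak q = i then
              2 * ((v (tak q) - v iStar) * (Z.wt q * (v (giv q) / v (tak q)))) else 0 := by
          intro i _
          by_cases h : tak q = i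
          · subst h; simp [hq]
          · simp [h]
        rw [Finset.sum_congr rfl e2, Finset.sum_ite_eq]
        by_cases hm : iStar < tak q ∧ tak q ≤ k
        · rw [if_pos (by simp [hm.1, hm.2])]
          rw [if_pos (show (isBin q = true ∧ tak q ≤ k) from ⟨hq, hm.2⟩)]
          rcases eq_or_lt_of_le (Z.wt_nonneg q) with hw | hw
          · rw [← hw]; ring_nf; exact le_refl _
          · have hvk : v (tak q) ≤ v k := hv.monotone hm.2
            have hgs : v (giv q) ≤ v iStar := ha q hq hw hvk
            have hr : 0 ≤ v (giv q) / v (tak q) :=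
              div_nonneg (le_of_lt (hvpos _)) (le_of_lt (hvpos _))
            have hprod : 0 ≤ Z.wt q * (v (giv q) / v (tak q)) * (v iStar - v (giv q)) := by
              apply mul_nonneg (mul_nonneg (le_of_lt hw) hr)
              linarith
            nlinarith [hprod]
        · rw [if_neg (by simpa using hm)]
          have := hBnonneg q
          linarith
      · have e2 : ∀ i ∈ Finset.univ.filter (fun i : Fin n => iStar < i ∧ i ≤ k),
            (if isBin q = true ∧ tak q = i then
              2 * ((v i - v iStar) * (Z.wt q * (v (giv q) / v (tak q)))) else 0) = 0 := by
          intro i _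
          rw [if_neg (by tauto)]
        rw [Finset.sum_congr rfl e2, Finset.sum_const_zero]
        have := hBnonneg q
        linarith
    rw [hsplit]
    linarith

end PD
end

section
/- Let s : (0,1] → ℝ≥0 be a step function with finitely many pieces. Then there exists a nondecreasing step function s̃ : (0,1] → ℝ≥0 with finitely many pieces such that: (i) ∫₀^m s̃(x)dx ≤ ∫₀^m s(x)dx for all m ∈ (0,1]; (ii) ∫₀^1 s̃(x)dx = ∫₀^1 s(x)dx; and (iii) at every point of discontinuity m₀ ∈ (0,1) of s̃, ∫₀^{m₀} s̃(x)dx = ∫₀^{m₀} s(x)dx. -/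
/-!
The nondecreasing step function is the derivative of the greatest convex minorant of the
cumulative integral `m ↦ ∫₀^m s`. On the partition of `s` this is a finite recursion: the first
piece of the minorant runs up to the partition point `p` minimizing the average `(∫₀^p s) / p`,
with that average as slope, and the rest is the minorant of the remaining pieces, whose slopes are
automatically at least this one. The minorant touches the cumulative integral at the end and at
every kink, which gives (ii) and (iii).
-/

open MeasureTheory Finset

namespace PD

/-- A step function on `(0,1]` with finitely many pieces: constant on each
interval of some finite partition of `(0,1]` into half-open intervals. -/
def IsStepFun (g : ℝ → ℝ) : Prop :=
  ∃ (k : ℕ) (t : Fin (k + 1) → ℝ), StrictMono t ∧ t 0 = 0 ∧ t (Fin.last k) = 1 ∧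
    ∀ i : Fin k, ∀ x ∈ Set.Ioc (t i.castSucc) (t i.succ),
      ∀ y ∈ Set.Ioc (t i.castSucc) (t i.succ), g x = g y

def IsMinorantSlope (k : ℕ) (l v : ℕ → ℝ) (b : ℝ) : Prop :=
  ∀ n ≤ k, b * ∑ j ∈ range n, l j ≤ ∑ j ∈ range n, v j * l j

/-- `w` is the slope sequence of the greatest convex minorant of the cumulative sums of `v`
with weights `l`. -/
structure IsConvexMinorantSlopes (k : ℕ) (l v w : ℕ → ℝ) : Prop where
  monotoneOn : MonotoneOn w (Set.Iio k)
  sum_le : ∀ n ≤ k, ∑ j ∈ range n, w j * l j ≤ ∑ j ∈ range n, v j * l j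
  sum_eq : ∑ j ∈ range k, w j * l j = ∑ j ∈ range k, v j * l j
  sum_eq_of_lt : ∀ n, n + 1 < k → w n < w (n + 1) →
    ∑ j ∈ range (n + 1), w j * l j = ∑ j ∈ range (n + 1), v j * l j

def prependConst (m : ℕ) (c : ℝ) (w : ℕ → ℝ) (j : ℕ) : ℝ :=
  if j < m then c else w (j - m)

section prependConst

variable {m : ℕ} {c : ℝ} {w l v : ℕ → ℝ}

theorem prependConst_of_lt {j : ℕ} (h : j < m) : prependConst m c w j = c := if_pos h

theorem prependConst_add (j : ℕ) : prependConst m c w (m + j) = w j := by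
  simp [prependConst]

theorem sum_range_prependConst_mul_of_le {n : ℕ} (h : n ≤ m) :
    ∑ j ∈ range n, prependConst m c w j * l j = c * ∑ j ∈ range n, l j := by
  rw [mul_sum]
  exact sum_congr rfl fun j hj => by rw [prependConst_of_lt (by simp at hj; omega)]

theorem sum_range_prependConst_mul_sub (hcm : c * ∑ j ∈ range m, l j = ∑ j ∈ range m, v j * l j)
    (n : ℕ) :
    ∑ j ∈ range (m + n), prependConst m c w j * l j - ∑ j ∈ range (m + n), v j * l j =
      ∑ j ∈ range n, w j * l (m + j) - ∑ j ∈ range n, v (m + j) * l (m + j) := by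
  simp only [sum_range_add, prependConst_add, sum_range_prependConst_mul_of_le le_rfl, hcm]
  ring

end prependConst

theorem IsMinorantSlope.tail {k m : ℕ} {l v : ℕ → ℝ} {c : ℝ} (hc : IsMinorantSlope k l v c)
    (hmk : m ≤ k) (hcm : c * ∑ j ∈ range m, l j = ∑ j ∈ range m, v j * l j) :
    IsMinorantSlope (k - m) (fun j => l (m + j)) (fun j => v (m + j)) c := by
  intro n hn
  have := hc (m + n) (by omega)
  rw [sum_range_add, sum_range_add, mul_add, hcm] at this
  linarith

theorem IsConvexMinorantSlopes.prependConst {k m : ℕ} {l v w : ℕ → ℝ} {c : ℝ}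
    (hw : IsConvexMinorantSlopes (k - m) (fun j => l (m + j)) (fun j => v (m + j)) w)
    (hmk : m ≤ k) (hc : IsMinorantSlope k l v c)
    (hcm : c * ∑ j ∈ range m, l j = ∑ j ∈ range m, v j * l j) (hcw : ∀ i < k - m, c ≤ w i) :
    IsConvexMinorantSlopes k l v (prependConst m c w) where
  monotoneOn i hi j hj hij := by
    simp only [Set.mem_Iio] at hi hj
    unfold PD.prependConst
    split_ifs with hi' hj' hj'
    · exact le_rfl
    · exact hcw _ (by omega)
    · omega
    · exact hw.monotoneOn (by simp; omega) (by simp; omega) (by omega)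
  sum_le n hn := by
    rcases le_or_gt n m with h | h
    · rw [sum_range_prependConst_mul_of_le h]
      exact hc n hn
    · obtain ⟨n, rfl⟩ := Nat.exists_eq_add_of_le h.le
      have := sum_range_prependConst_mul_sub (w := w) hcm n
      linarith [hw.sum_le n (by omega)]
  sum_eq := by
    have := sum_range_prependConst_mul_sub (w := w) hcm (k - m)
    rw [Nat.add_sub_cancel' hmk] at this
    linarith [hw.sum_eq]
  sum_eq_of_lt n hnk hjump := by
    rcases lt_trichotomy (n + 1) m with h | h | h
    · simp [prependConst_of_lt h, prependConst_of_lt (Nat.lt_of_succ_lt h)] at hjump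
    · rw [← h] at hcm
      rwa [sum_range_prependConst_mul_of_le h.le]
    · obtain ⟨n, rfl⟩ := Nat.exists_eq_add_of_le (Nat.le_of_lt_succ h)
      rw [add_assoc, prependConst_add, prependConst_add] at hjump
      have := sum_range_prependConst_mul_sub (w := w) hcm (n + 1)
      rw [← add_assoc] at this
      linarith [hw.sum_eq_of_lt n (by omega) hjump]

theorem exists_isConvexMinorantSlopes (k : ℕ) (l v : ℕ → ℝ) (hl : ∀ i < k, 0 < l i) :
    ∃ w, IsConvexMinorantSlopes k l v w ∧ ∀ b, IsMinorantSlope k l v b → ∀ i < k, b ≤ w i := by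
  induction k using Nat.strong_induction_on generalizing l v with
  | _ k ih =>
    rcases k.eq_zero_or_pos with rfl | hk
    · exact ⟨fun _ => 0, ⟨monotoneOn_const, by simp, by simp, by simp⟩, by simp⟩
    have hT : ∀ n, 0 < n → n ≤ k → 0 < ∑ j ∈ range n, l j := fun n hn hnk =>
      sum_pos (fun j hj => hl j (by simp at hj; omega)) ⟨0, by simpa⟩
    obtain ⟨m, hm, hmin⟩ := exists_min_image (Icc 1 k)
      (fun n => (∑ j ∈ range n, v j * l j) / ∑ j ∈ range n, l j) ⟨k, by simp; omega⟩
    rw [mem_Icc] at hm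
    set c := (∑ j ∈ range m, v j * l j) / ∑ j ∈ range m, l j
    have hcm : c * ∑ j ∈ range m, l j = ∑ j ∈ range m, v j * l j :=
      div_mul_cancel₀ _ (hT m hm.1 hm.2).ne'
    have hc : IsMinorantSlope k l v c := by
      intro n hn
      rcases n.eq_zero_or_pos with rfl | hn0
      · simp
      · exact (le_div_iff₀ (hT n hn0 hn)).1 (hmin n (by simp; omega))
    obtain ⟨w, hw, hw_ge⟩ := ih (k - m) (by omega) (fun j => l (m + j)) (fun j => v (m + j))
      fun i hi => hl (m + i) (by omega)
    have hcw := hw_ge c (hc.tail hm.2 hcm)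
    refine ⟨prependConst m c w, hw.prependConst hm.2 hc hcm hcw, fun b hb i hi => ?_⟩
    have hbc : b ≤ c := le_of_mul_le_mul_right (hcm ▸ hb m hm.2) (hT m hm.1 hm.2)
    unfold prependConst
    split_ifs
    · exact hbc
    · exact hbc.trans (hcw _ (by omega))

theorem IsStepFun.exists_nat_partition {g : ℝ → ℝ} (hg : IsStepFun g) :
    ∃ (k : ℕ) (p : ℕ → ℝ), Monotone p ∧ (∀ i < k, p i < p (i + 1)) ∧ p 0 = 0 ∧ p k = 1 ∧
      ∀ i < k, ∀ x ∈ Set.Ioc (p i) (p (i + 1)), g x = g (p (i + 1)) := by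
  obtain ⟨k, τ, hτ, hτ0, hτ1, hτg⟩ := hg
  refine ⟨k, fun n => τ ⟨min n k, by omega⟩, fun a b hab => hτ.monotone (by simp; omega),
    fun i hi => hτ (by simp; omega), by simpa using hτ0, by simpa [Fin.last] using hτ1,
    fun i hi x hx => ?_⟩
  have hl : τ ⟨min i k, by omega⟩ = τ (Fin.castSucc ⟨i, hi⟩) :=
    congrArg τ (Fin.ext (by simp; omega))
  have hr : τ ⟨min (i + 1) k, by omega⟩ = τ (Fin.succ ⟨i, hi⟩) :=
    congrArg τ (Fin.ext (by simp; omega))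
  dsimp only at hx ⊢
  rw [hl, hr] at hx
  rw [hr]
  exact hτg ⟨i, hi⟩ x hx _ ⟨hτ Fin.castSucc_lt_succ, le_rfl⟩

theorem isStepFun_of_nat_partition {g : ℝ → ℝ} {k : ℕ} {p u : ℕ → ℝ}
    (hp : ∀ i < k, p i < p (i + 1)) (hp0 : p 0 = 0) (hpk : p k = 1)
    (hg : ∀ i < k, ∀ x ∈ Set.Ioc (p i) (p (i + 1)), g x = u i) : IsStepFun g :=
  ⟨k, fun i => p i, Fin.strictMono_iff_lt_succ.2 fun i => hp i i.isLt, hp0, hpk,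
    fun i x hx y hy => (hg i i.isLt x hx).trans (hg i i.isLt y hy).symm⟩

theorem exists_mem_Ioc_nat (p : ℕ → ℝ) {k : ℕ} {x : ℝ} (hx : x ∈ Set.Ioc (p 0) (p k)) :
    ∃ i < k, x ∈ Set.Ioc (p i) (p (i + 1)) := by
  induction k with
  | zero => exact absurd (hx.1.trans_le hx.2) (lt_irrefl _)
  | succ k ih =>
    rcases le_or_gt x (p k) with h | h
    · obtain ⟨i, hi, hxi⟩ := ih ⟨hx.1, h⟩
      exact ⟨i, by omega, hxi⟩
    · exact ⟨k, by omega, h, hx.2⟩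

noncomputable def pieceIndex (k : ℕ) (p : ℕ → ℝ) (x : ℝ) : ℕ :=
  Nat.findGreatest (fun i => p i < x) k

section pieceIndex

variable {k : ℕ} {p : ℕ → ℝ}

theorem pieceIndex_eq (hp : Monotone p) {i : ℕ} (hi : i < k) {x : ℝ}
    (hx : x ∈ Set.Ioc (p i) (p (i + 1))) : pieceIndex k p x = i :=
  Nat.findGreatest_eq_iff.2 ⟨hi.le, fun _ => hx.1,
    fun _ hj _ => not_lt.2 (hx.2.trans (hp (Nat.succ_le_of_lt hj)))⟩

theorem pieceIndex_lt (hp : Monotone p) {x : ℝ} (hx : x ∈ Set.Ioc (p 0) (p k)) :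
    pieceIndex k p x < k := by
  obtain ⟨i, hi, hxi⟩ := exists_mem_Ioc_nat p hx
  rwa [pieceIndex_eq hp hi hxi]

theorem pieceIndex_mono {x y : ℝ} (hxy : x ≤ y) : pieceIndex k p x ≤ pieceIndex k p y :=
  Nat.findGreatest_mono_left (fun _ hi => hi.trans_le hxy) k

theorem eq_of_not_continuousAt_comp_pieceIndex (hp : Monotone p)
    (hp_lt : ∀ i < k, p i < p (i + 1)) {w : ℕ → ℝ} (hw : MonotoneOn w (Set.Iio k)) {x : ℝ}
    (hx : x ∈ Set.Ioo (p 0) (p k)) (hx_disc : ¬ContinuousAt (fun y => w (pieceIndex k p y)) x) :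
    ∃ n, n + 1 < k ∧ x = p (n + 1) ∧ w n < w (n + 1) := by
  have hconst : ∀ {a b c}, x ∈ Set.Ioo a b →
      Set.EqOn (fun y => w (pieceIndex k p y)) (fun _ => c) (Set.Ioo a b) →
      ContinuousAt (fun y => w (pieceIndex k p y)) x := fun hx h =>
    (continuousOn_const.congr h).continuousAt (Ioo_mem_nhds hx.1 hx.2)
  have hpiece : ∀ {i}, i < k → ∀ y ∈ Set.Ioc (p i) (p (i + 1)), w (pieceIndex k p y) = w i :=
    fun hi y hy => congrArg w (pieceIndex_eq hp hi hy)
  obtain ⟨n, hn, hxn⟩ := exists_mem_Ioc_nat p (Set.Ioo_subset_Ioc_self hx)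
  rcases hxn.2.lt_or_eq with hlt | rfl
  · exact absurd (hconst ⟨hxn.1, hlt⟩ fun y hy => hpiece hn y (Set.Ioo_subset_Ioc_self hy))
      hx_disc
  have hn1 : n + 1 < k := by
    by_contra h
    exact hx.2.ne (by rw [show k = n + 1 by omega])
  refine ⟨n, hn1, rfl, (hw (by simp; omega) (by simp; omega) n.le_succ).lt_of_ne fun heq => ?_⟩
  refine hx_disc (hconst (c := w n) ⟨hxn.1, hp_lt _ hn1⟩ fun y hy => ?_)
  rcases le_or_gt y (p (n + 1)) with h | h
  · exact hpiece hn y ⟨hy.1, h⟩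
  · exact (hpiece hn1 y ⟨h, hy.2.le⟩).trans heq.symm

end pieceIndex

section Integral

variable {g : ℝ → ℝ}

theorem intervalIntegrable_of_eqOn_Ioc {a b c : ℝ} (hab : a ≤ b)
    (h : Set.EqOn g (fun _ => c) (Set.Ioc a b)) :
    IntervalIntegrable g volume a b :=
  (intervalIntegrable_congr (Set.uIoc_of_le hab ▸ h)).2 intervalIntegrable_const

theorem intervalIntegral_eq_of_eqOn_Ioc {a b c : ℝ} (hab : a ≤ b)
    (h : Set.EqOn g (fun _ => c) (Set.Ioc a b)) :
    ∫ x in a..b, g x = c * (b - a) := by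
  rw [intervalIntegral.integral_congr_Ioo_of_le hab (h.mono Set.Ioo_subset_Ioc_self),
    intervalIntegral.integral_const, smul_eq_mul, mul_comm]

variable {k : ℕ} {p u : ℕ → ℝ} (hp : Monotone p)
  (hg : ∀ i < k, ∀ x ∈ Set.Ioc (p i) (p (i + 1)), g x = u i)
include hp hg

theorem intervalIntegral_eq_sum {n : ℕ} (hn : n ≤ k) :
    ∫ x in p 0..p n, g x = ∑ j ∈ range n, u j * (p (j + 1) - p j) := by
  rw [← intervalIntegral.sum_integral_adjacent_intervals fun j hj =>
    intervalIntegrable_of_eqOn_Ioc (hp j.le_succ) (hg j (by omega))]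
  exact sum_congr rfl fun j hj =>
    intervalIntegral_eq_of_eqOn_Ioc (hp j.le_succ) (hg j (by simp at hj; omega))

theorem intervalIntegral_eq_sum_add {n : ℕ} (hn : n < k) {m : ℝ}
    (hm : m ∈ Set.Icc (p n) (p (n + 1))) :
    ∫ x in p 0..m, g x = ∑ j ∈ range n, u j * (p (j + 1) - p j) + u n * (m - p n) := by
  have hgn : Set.EqOn g (fun _ => u n) (Set.Ioc (p n) m) :=
    fun x hx => hg n hn x ⟨hx.1, hx.2.trans hm.2⟩
  have h0n : IntervalIntegrable g volume (p 0) (p n) := IntervalIntegrable.trans_iterate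
    fun j hj => intervalIntegrable_of_eqOn_Ioc (hp j.le_succ) (hg j (by omega))
  rw [← intervalIntegral.integral_add_adjacent_intervals h0n
    (intervalIntegrable_of_eqOn_Ioc hm.1 hgn), intervalIntegral_eq_sum hp hg hn.le,
    intervalIntegral_eq_of_eqOn_Ioc hm.1 hgn]

theorem intervalIntegral_le_of_sum_le {g' : ℝ → ℝ} {u' : ℕ → ℝ}
    (hg' : ∀ i < k, ∀ x ∈ Set.Ioc (p i) (p (i + 1)), g' x = u' i)
    (h : ∀ n ≤ k, ∑ j ∈ range n, u j * (p (j + 1) - p j) ≤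
      ∑ j ∈ range n, u' j * (p (j + 1) - p j))
    {m : ℝ} (hm : m ∈ Set.Ioc (p 0) (p k)) :
    ∫ x in p 0..m, g x ≤ ∫ x in p 0..m, g' x := by
  obtain ⟨n, hn, hmn⟩ := exists_mem_Ioc_nat p hm
  rw [intervalIntegral_eq_sum_add hp hg hn (Set.Ioc_subset_Icc_self hmn),
    intervalIntegral_eq_sum_add hp hg' hn (Set.Ioc_subset_Icc_self hmn)]
  have hn₀ := h n hn.le
  have hn₁ := h (n + 1) hn
  rw [sum_range_succ, sum_range_succ] at hn₁
  have hL : 0 < p (n + 1) - p n := sub_pos.2 (hmn.1.trans_le hmn.2)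
  -- both sides are affine in `m` on the piece, so the inequality at its two ends propagates
  nlinarith [mul_nonneg (sub_nonneg.2 hmn.2) (sub_nonneg.2 hn₀),
    mul_nonneg (sub_nonneg.2 hmn.1.le) (sub_nonneg.2 hn₁)]

end Integral

theorem stmt13 (s : ℝ → ℝ) (hs : IsStepFun s)
    (hs0 : ∀ x ∈ Set.Ioc (0 : ℝ) 1, 0 ≤ s x) :
    ∃ t : ℝ → ℝ, IsStepFun t ∧ (∀ x ∈ Set.Ioc (0 : ℝ) 1, 0 ≤ t x) ∧
      MonotoneOn t (Set.Ioc (0 : ℝ) 1) ∧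
      (∀ m ∈ Set.Ioc (0 : ℝ) 1,
        (∫ x in Set.Ioc (0 : ℝ) m, t x) ≤ ∫ x in Set.Ioc (0 : ℝ) m, s x) ∧
      ((∫ x in Set.Ioc (0 : ℝ) 1, t x) = ∫ x in Set.Ioc (0 : ℝ) 1, s x) ∧
      (∀ m₀ ∈ Set.Ioo (0 : ℝ) 1, ¬ ContinuousAt t m₀ →
        (∫ x in Set.Ioc (0 : ℝ) m₀, t x) = ∫ x in Set.Ioc (0 : ℝ) m₀, s x) := by
  obtain ⟨k, p, hp, hp_lt, hp0, hpk, hs_const⟩ := hs.exists_nat_partition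
  obtain ⟨w, hw, hw_ge⟩ := exists_isConvexMinorantSlopes k (fun i => p (i + 1) - p i)
    (fun i => s (p (i + 1))) fun i hi => sub_pos.2 (hp_lt i hi)
  have hw_nonneg : ∀ i < k, 0 ≤ w i := hw_ge 0 fun n hn => by
    rw [zero_mul]
    refine sum_nonneg fun j hj => mul_nonneg (hs0 _ ?_) (sub_nonneg.2 (hp j.le_succ))
    rw [mem_range] at hj
    exact ⟨hp0 ▸ (hp_lt 0 (by omega)).trans_le (hp (by omega)), hpk ▸ hp (by omega)⟩
  set t : ℝ → ℝ := fun x => w (pieceIndex k p x)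
  have ht : ∀ i < k, ∀ x ∈ Set.Ioc (p i) (p (i + 1)), t x = w i :=
    fun i hi x hx => congrArg w (pieceIndex_eq hp hi hx)
  have hI : ∀ f : ℝ → ℝ, ∀ m : ℝ, 0 ≤ m → ∫ x in Set.Ioc 0 m, f x = ∫ x in p 0..m, f x :=
    fun f m hm => by rw [hp0, intervalIntegral.integral_of_le hm]
  have hunit : Set.Ioc (0 : ℝ) 1 = Set.Ioc (p 0) (p k) := by rw [hp0, hpk]
  refine ⟨t, isStepFun_of_nat_partition hp_lt hp0 hpk ht,
    fun x hx => hw_nonneg _ (pieceIndex_lt hp (hunit ▸ hx)),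
    fun x hx y hy hxy => hw.monotoneOn (pieceIndex_lt hp (hunit ▸ hx))
      (pieceIndex_lt hp (hunit ▸ hy)) (pieceIndex_mono hxy),
    fun m hm => ?_, ?_, fun m hm hm_disc => ?_⟩
  · rw [hI _ _ hm.1.le, hI _ _ hm.1.le]
    exact intervalIntegral_le_of_sum_le hp ht hs_const hw.sum_le (hunit ▸ hm)
  · rw [hI _ _ zero_le_one, hI _ _ zero_le_one, ← hpk, intervalIntegral_eq_sum hp ht le_rfl,
      intervalIntegral_eq_sum hp hs_const le_rfl]
    exact hw.sum_eq
  · obtain ⟨n, hn, rfl, hjump⟩ := eq_of_not_continuousAt_comp_pieceIndex hp hp_lt hw.monotoneOn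
      (by rwa [hp0, hpk]) hm_disc
    rw [hI _ _ hm.1.le, hI _ _ hm.1.le, intervalIntegral_eq_sum hp ht hn.le,
      intervalIntegral_eq_sum hp hs_const hn.le]
    exact hw.sum_eq_of_lt n hn hjump

end PD
end
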